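/- arXiv:2110.02451 — 4 statements merged into one kernel-verified Lean document; each statement's English description precedes it below -/
import Mathlib

section
/- For every real number z one has e^{4πz²}·(8πz⁴ + 1/π − 4z²) ≥ 1/π, with strict inequality whenever z ≠ 0. Equivalently, the function z ↦ e^{4πz²}(8πz⁴ + 1/π − 4z²) − 1/π is nonnegative on ℝ and vanishes only at z = 0. -/
open Real

lemma key_aux (t : ℝ) (ht : 0 ≤ t) : 1 + t ^ 3 / 6 ≤ exp t * (t ^ 2 / 2 - t + 1) := by
  have h := Real.sum_le_exp_of_nonneg ht 4
  simp [Finset.sum_range_succ, Nat.factorial] at h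
  have hq : 0 < t ^ 2 / 2 - t + 1 := by nlinarith [sq_nonneg (t - 1)]
  nlinarith [mul_le_mul_of_nonneg_right h hq.le, pow_nonneg ht 4, pow_nonneg ht 5]

/-- For every real `z`, `e^{4πz²}(8πz⁴ + 1/π − 4z²) ≥ 1/π`, with strict
inequality when `z ≠ 0`. -/
theorem stmt5 (z : ℝ) :
    1 / π ≤ exp (4 * π * z ^ 2) * (8 * π * z ^ 4 + 1 / π - 4 * z ^ 2) ∧
    (z ≠ 0 → 1 / π < exp (4 * π * z ^ 2) * (8 * π * z ^ 4 + 1 / π - 4 * z ^ 2)) := by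
  have hπ : (0:ℝ) < π := pi_pos
  set t := 4 * π * z ^ 2 with htdef
  have ht : 0 ≤ t := by positivity
  have hkey := key_aux t ht
  have heq : 8 * π * z ^ 4 + 1 / π - 4 * z ^ 2 = (t ^ 2 / 2 - t + 1) / π := by
    field_simp [htdef]
    ring
  rw [heq]
  constructor
  · rw [mul_div_assoc', div_le_div_iff_of_pos_right hπ]
    nlinarith [pow_nonneg ht 3]
  · intro hz
    have htpos : 0 < t := by
      have : 0 < z ^ 2 := by positivity
      positivity
    rw [mul_div_assoc', div_lt_div_iff_of_pos_right hπ]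
    nlinarith [pow_pos htpos 3]
end

section
/- Let ω > 0, μ ∈ {0,1}, and let φ : ℝ² → ℝ be a Schwartz function satisfying the profile equation −Δφ + ωφ = (e^{4πφ²} − 1 − 4πμφ²)φ pointwise on ℝ². Then the Pohozaev identity holds: (ω/2)·∫_{ℝ²} φ(x)² dx = ∫_{ℝ²} F_μ(φ(x)) dx, where F_μ(z) = (1/(8π))(e^{4πz²} − 1 − 4πz² − 8π²μz⁴). -/
open Real MeasureTheory

/-- Partial derivative in direction `i` of a function on `ℝ²`. -/
noncomputable def pd (i : Fin 2) (g : EuclideanSpace ℝ (Fin 2) → ℝ)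
    (x : EuclideanSpace ℝ (Fin 2)) : ℝ :=
  fderiv ℝ g x (EuclideanSpace.single i 1)

/-- The Laplacian `Δg = ∂₁²g + ∂₂²g` on `ℝ²`. -/
noncomputable def lap (g : EuclideanSpace ℝ (Fin 2) → ℝ)
    (x : EuclideanSpace ℝ (Fin 2)) : ℝ :=
  pd 0 (pd 0 g) x + pd 1 (pd 1 g) x

namespace PohAux

local notation "E2" => EuclideanSpace ℝ (Fin 2)

/-! ### measure-preserving coordinates -/

noncomputable def em : (ℝ × ℝ) ≃ᵐ EuclideanSpace ℝ (Fin 2) :=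
  (MeasurableEquiv.finTwoArrow (α := ℝ)).symm.trans
    (MeasurableEquiv.toLp 2 (Fin 2 → ℝ))

lemma em_mp : MeasurePreserving em volume volume :=
  (EuclideanSpace.volume_preserving_symm_measurableEquiv_toLp (Fin 2)).symm.comp
    (volume_preserving_finTwoArrow ℝ).symm

lemma exists_T (i : Fin 2) :
    ∃ T : ℝ × ℝ → E2, MeasurePreserving T volume volume ∧ MeasurableEmbedding T ∧
      (∀ b t, T (b, t) = T (b, 0) + t • (EuclideanSpace.single i (1:ℝ))) ∧
      (∀ b t, (T (b, t)) i = t) := by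
  fin_cases i
  · refine ⟨⇑(MeasurableEquiv.prodComm.trans em), ?_, ?_, ?_, ?_⟩
    · have hswap : MeasurePreserving (Prod.swap : ℝ × ℝ → ℝ × ℝ) volume volume := by
        rw [Measure.volume_eq_prod]; exact Measure.measurePreserving_swap
      exact em_mp.comp hswap
    · exact (MeasurableEquiv.prodComm.trans em).measurableEmbedding
    · intro b t
      ext j
      fin_cases j <;>
        simp [em, MeasurableEquiv.prodComm, PiLp.add_apply, PiLp.smul_apply,
          EuclideanSpace.single_apply, MeasurableEquiv.trans_apply,
          MeasurableEquiv.coe_toLp]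
    · intro b t; rfl
  · refine ⟨⇑em, em_mp, em.measurableEmbedding, ?_, fun b t => rfl⟩
    intro b t
    ext j
    fin_cases j <;>
      simp [em, PiLp.add_apply, PiLp.smul_apply, EuclideanSpace.single_apply,
        MeasurableEquiv.coe_toLp]

/-! ### 1-D slicing and integration by parts -/

lemma slice_hasDerivAt (T : ℝ × ℝ → E2) (v : E2)
    (hTa : ∀ b t, T (b, t) = T (b, 0) + t • v)
    {g : E2 → ℝ} (hd : Differentiable ℝ g) (b t : ℝ) :
    HasDerivAt (fun s => g (T (b, s))) (fderiv ℝ g (T (b, t)) v) t := by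
  have hline : HasDerivAt (fun s : ℝ => T (b, 0) + s • v) v t := by
    simpa using ((hasDerivAt_id t).smul_const v).const_add (T (b, 0))
  have hcomp : HasDerivAt (fun s => g (T (b, 0) + s • v))
      (fderiv ℝ g (T (b, 0) + t • v) v) t :=
    (hd (T (b, 0) + t • v)).hasFDerivAt.comp_hasDerivAt t hline
  have hfun : (fun s => g (T (b, 0) + s • v)) = fun s => g (T (b, s)) := by
    funext s; rw [hTa b s]
  rw [hTa b t]
  rw [← hfun]
  exact hcomp

lemma ibp_zero_core (T : ℝ × ℝ → E2) (hT : MeasurePreserving T volume volume)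
    (hTe : MeasurableEmbedding T) (v : E2)
    (hTa : ∀ b t, T (b, t) = T (b, 0) + t • v)
    (g : E2 → ℝ) (hd : Differentiable ℝ g)
    (h1 : Integrable g volume)
    (h2 : Integrable (fun x => fderiv ℝ g x v) volume) :
    ∫ x : E2, fderiv ℝ g x v = 0 := by
  have h1' : Integrable (fun p : ℝ × ℝ => g (T p)) volume :=
    (hT.integrable_comp_emb hTe).2 h1
  have h2' : Integrable (fun p : ℝ × ℝ => fderiv ℝ g (T p) v) volume :=
    (hT.integrable_comp_emb hTe).2 h2
  rw [← hT.integral_comp hTe]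
  rw [Measure.volume_eq_prod] at h1' h2' ⊢
  rw [integral_prod _ h2']
  have hae : ∀ᵐ b : ℝ, (∫ t : ℝ, fderiv ℝ g (T (b, t)) v) = 0 := by
    filter_upwards [h1'.prod_right_ae, h2'.prod_right_ae] with b hb1 hb2
    exact integral_eq_zero_of_hasDerivAt_of_integrable
      (fun t => slice_hasDerivAt T v hTa hd b t) hb2 hb1
  rw [integral_congr_ae hae, integral_zero]

lemma ibp_mul_core (T : ℝ × ℝ → E2) (hT : MeasurePreserving T volume volume)
    (hTe : MeasurableEmbedding T) (v : E2)
    (hTa : ∀ b t, T (b, t) = T (b, 0) + t • v)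
    (c : E2 → ℝ) (hc : ∀ b t, c (T (b, t)) = t)
    (g : E2 → ℝ) (hd : Differentiable ℝ g)
    (h1 : Integrable g volume)
    (h3 : Integrable (fun x => c x * g x) volume)
    (h4 : Integrable (fun x => c x * fderiv ℝ g x v) volume) :
    ∫ x : E2, c x * fderiv ℝ g x v = - ∫ x : E2, g x := by
  have key : ∫ x : E2, (g x + c x * fderiv ℝ g x v) = 0 := by
    have h1' : Integrable (fun p : ℝ × ℝ => g (T p)) volume :=
      (hT.integrable_comp_emb hTe).2 h1
    have h3' : Integrable (fun p : ℝ × ℝ => c (T p) * g (T p)) volume :=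
      (hT.integrable_comp_emb hTe).2 h3
    have h4' : Integrable (fun p : ℝ × ℝ => c (T p) * fderiv ℝ g (T p) v) volume :=
      (hT.integrable_comp_emb hTe).2 h4
    have hsum' : Integrable
        (fun p : ℝ × ℝ => g (T p) + c (T p) * fderiv ℝ g (T p) v) volume :=
      h1'.add h4'
    rw [← hT.integral_comp hTe]
    rw [Measure.volume_eq_prod] at h1' h3' h4' hsum' ⊢
    rw [integral_prod _ hsum']
    have hae : ∀ᵐ b : ℝ,
        (∫ t : ℝ, (g (T (b, t)) + c (T (b, t)) * fderiv ℝ g (T (b, t)) v)) = 0 := by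
      filter_upwards [h1'.prod_right_ae, h3'.prod_right_ae, h4'.prod_right_ae]
        with b hb1 hb3 hb4
      have hu : ∀ t : ℝ, HasDerivAt (fun s => s * g (T (b, s)))
          (g (T (b, t)) + c (T (b, t)) * fderiv ℝ g (T (b, t)) v) t := by
        intro t
        have := (hasDerivAt_id t).mul (slice_hasDerivAt T v hTa hd b t)
        simpa [hc b t, Pi.mul_def] using this
      have hint_u : Integrable (fun t : ℝ => t * g (T (b, t))) volume := by
        have heqf : (fun t : ℝ => c (T (b, t)) * g (T (b, t)))
            = fun t : ℝ => t * g (T (b, t)) := by funext t; rw [hc b t]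
        rwa [heqf] at hb3
      have hint_u' : Integrable
          (fun t : ℝ => g (T (b, t)) + c (T (b, t)) * fderiv ℝ g (T (b, t)) v) volume :=
        hb1.add hb4
      exact integral_eq_zero_of_hasDerivAt_of_integrable hu hint_u' hint_u
    rw [integral_congr_ae hae, integral_zero]
  rw [integral_add h1 h4] at key
  linarith

lemma ibp_zero (i : Fin 2) (g : E2 → ℝ) (hd : Differentiable ℝ g)
    (h1 : Integrable g volume) (h2 : Integrable (pd i g) volume) :
    (∫ x : E2, pd i g x) = 0 := by
  obtain ⟨T, hT, hTe, hTa, -⟩ := exists_T i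
  exact ibp_zero_core T hT hTe _ hTa g hd h1 h2

lemma ibp_mul (i : Fin 2) (g : E2 → ℝ) (hd : Differentiable ℝ g)
    (h1 : Integrable g volume)
    (h3 : Integrable (fun x => x i * g x) volume)
    (h4 : Integrable (fun x => x i * pd i g x) volume) :
    (∫ x : E2, x i * pd i g x) = - ∫ x : E2, g x := by
  obtain ⟨T, hT, hTe, hTa, hTc⟩ := exists_T i
  exact ibp_mul_core T hT hTe _ hTa (fun x => x i) hTc g hd h1 h3 h4

/-! ### pointwise derivative computations -/

lemma coord_abs_le (x : E2) (i : Fin 2) : |x i| ≤ ‖x‖ := by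
  have h2 := abs_real_inner_le_norm (EuclideanSpace.single i (1:ℝ)) x
  rw [EuclideanSpace.norm_single] at h2
  simpa [EuclideanSpace.inner_single_left] using h2

lemma diff_coord (i : Fin 2) : Differentiable ℝ (fun y : E2 => y i) :=
  (EuclideanSpace.proj (𝕜 := ℝ) i).differentiable

lemma cont_coord (i : Fin 2) : Continuous (fun y : E2 => y i) :=
  (EuclideanSpace.proj (𝕜 := ℝ) i).continuous

lemma pd_mul (i : Fin 2) (f g : E2 → ℝ) (hf : Differentiable ℝ f)
    (hg : Differentiable ℝ g) :
    pd i (fun y => f y * g y) = fun x => pd i f x * g x + f x * pd i g x := by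
  funext x
  have h := ((hf x).hasFDerivAt.mul (hg x).hasFDerivAt)
  rw [pd, show (fun y => f y * g y) = f * g from rfl, h.fderiv]
  simp [pd]
  ring

lemma pd_comp (i : Fin 2) (F F' : ℝ → ℝ) (hF : ∀ z, HasDerivAt F (F' z) z)
    (h : E2 → ℝ) (hd : Differentiable ℝ h) :
    pd i (fun y => F (h y)) = fun x => F' (h x) * pd i h x := by
  funext x
  have hc : HasFDerivAt (fun y => F (h y)) ((F' (h x)) • fderiv ℝ h x) x :=
    (hF (h x)).comp_hasFDerivAt x (hd x).hasFDerivAt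
  rw [pd, hc.fderiv]
  simp [pd]

lemma pd_proj (i j : Fin 2) :
    pd j (fun y : E2 => y i) = fun _ => (if i = j then (1:ℝ) else 0) := by
  funext x
  have h : HasFDerivAt (fun y : E2 => y i) (EuclideanSpace.proj (𝕜 := ℝ) i) x :=
    (EuclideanSpace.proj (𝕜 := ℝ) i).hasFDerivAt
  rw [pd, h.fderiv]
  simp [EuclideanSpace.single_apply]

lemma pd_comm (f : SchwartzMap (EuclideanSpace ℝ (Fin 2)) ℝ) (i j : Fin 2) (x : E2) :
    pd i (pd j ⇑f) x = pd j (pd i ⇑f) x := by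
  have hfd : ∀ y, HasFDerivAt f (fderiv ℝ f y) y := fun y =>
    f.differentiableAt.hasFDerivAt
  have h2 : HasFDerivAt (fderiv ℝ (⇑f)) (fderiv ℝ (fderiv ℝ (⇑f)) x) x := by
    have hc : ContDiff ℝ ((⊤:ℕ∞) : WithTop ℕ∞) (fderiv ℝ (⇑f)) :=
      (f.smooth ⊤).fderiv_right (m := ((⊤:ℕ∞) : WithTop ℕ∞)) (by exact_mod_cast le_top)
    exact (hc.differentiable (by simp) x).hasFDerivAt
  have hsym := second_derivative_symmetric hfd h2
  have key : ∀ v w : E2, fderiv ℝ (fun y => fderiv ℝ (⇑f) y w) x v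
      = fderiv ℝ (fderiv ℝ (⇑f)) x v w := by
    intro v w
    have hL : HasFDerivAt (fun y => fderiv ℝ (⇑f) y w)
        ((ContinuousLinearMap.apply ℝ ℝ w).comp (fderiv ℝ (fderiv ℝ (⇑f)) x)) x :=
      (ContinuousLinearMap.apply ℝ ℝ w).hasFDerivAt.comp x h2
    rw [hL.fderiv]
    rfl
  show fderiv ℝ (fun y => fderiv ℝ (⇑f) y (EuclideanSpace.single j 1)) x
      (EuclideanSpace.single i 1) = fderiv ℝ (fun y => fderiv ℝ (⇑f) y
      (EuclideanSpace.single i 1)) x (EuclideanSpace.single j 1)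
  rw [key, key]
  exact hsym _ _

/-! ### integrability -/

lemma schwartz_sup (h : SchwartzMap (EuclideanSpace ℝ (Fin 2)) ℝ) :
    ∃ M : ℝ, 0 ≤ M ∧ ∀ x, ‖h x‖ ≤ M := by
  refine ⟨SchwartzMap.seminorm ℝ 0 0 h, apply_nonneg _ _, fun x => ?_⟩
  have := SchwartzMap.le_seminorm ℝ 0 0 h x
  simpa using this

lemma integ_major (f : E2 → ℝ) (hf : AEStronglyMeasurable f volume)
    (h : SchwartzMap (EuclideanSpace ℝ (Fin 2)) ℝ) (C : ℝ)
    (hb : ∀ x, ‖f x‖ ≤ C * ((1 + ‖x‖) * ‖h x‖)) : Integrable f volume := by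
  have h2 : Integrable (fun x : E2 => ‖x‖ * ‖h x‖) volume := by
    simpa using h.integrable_pow_mul (volume : Measure E2) 1
  have h1 : Integrable (fun x : E2 => ‖h x‖) volume := h.integrable.norm
  have hmaj : Integrable (fun x : E2 => C * ((1 + ‖x‖) * ‖h x‖)) volume := by
    have := (h1.add h2).const_mul C
    simpa [add_mul, mul_add] using this
  exact hmaj.mono' hf (Filter.Eventually.of_forall hb)

lemma integ_sch (h k : SchwartzMap (EuclideanSpace ℝ (Fin 2)) ℝ) (f : E2 → ℝ)
    (hf : AEStronglyMeasurable f volume) (a : ℝ) (ha : 0 ≤ a)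
    (hb : ∀ x, ‖f x‖ ≤ a * ((1 + ‖x‖) * (‖h x‖ * ‖k x‖))) : Integrable f volume := by
  obtain ⟨M, hM0, hM⟩ := schwartz_sup h
  apply integ_major f hf k (a * M)
  intro x
  calc ‖f x‖ ≤ a * ((1 + ‖x‖) * (‖h x‖ * ‖k x‖)) := hb x
    _ ≤ a * ((1 + ‖x‖) * (M * ‖k x‖)) := by
        gcongr
        exact hM x
    _ = a * M * ((1 + ‖x‖) * ‖k x‖) := by ring

lemma key_int (i : Fin 2) (h k : SchwartzMap (EuclideanSpace ℝ (Fin 2)) ℝ) :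
    Integrable (fun x : E2 => x i * (h x * k x)) volume := by
  apply integ_sch h k _ (((cont_coord i).mul
    (h.continuous.mul k.continuous)).aestronglyMeasurable) 1 zero_le_one
  intro x
  rw [one_mul, Pi.mul_apply, Pi.mul_apply, norm_mul, norm_mul]
  apply mul_le_mul_of_nonneg_right _ (by positivity)
  have := coord_abs_le x i
  rw [Real.norm_eq_abs]
  linarith [norm_nonneg x]

lemma plain_int (h k : SchwartzMap (EuclideanSpace ℝ (Fin 2)) ℝ) :
    Integrable (fun x : E2 => h x * k x) volume := by
  apply integ_sch h k _ ((h.continuous.mul k.continuous).aestronglyMeasurable) 1 zero_le_one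
  intro x
  rw [one_mul, Pi.mul_apply, norm_mul]
  have hp : (0:ℝ) ≤ ‖h x‖ * ‖k x‖ := by positivity
  nlinarith [mul_nonneg (norm_nonneg x) hp]

/-! ### the nonlinearity -/

lemma hasDerivAt_Fm (μ z : ℝ) :
    HasDerivAt (fun z : ℝ => 1/(8*π) * (exp (4*π*z^2) - 1 - 4*π*z^2 - 8*π^2*μ*z^4))
      ((exp (4*π*z^2) - 1 - 4*π*μ*z^2) * z) z := by
  have h1 : HasDerivAt (fun z : ℝ => 4*π*z^2) (4*π*(2*z)) z := by
    simpa using ((hasDerivAt_pow 2 z).const_mul (4*π))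
  have h2 : HasDerivAt (fun z : ℝ => exp (4*π*z^2)) (exp (4*π*z^2) * (4*π*(2*z))) z :=
    h1.exp
  have h3 : HasDerivAt (fun z : ℝ => 8*π^2*μ*z^4) (8*π^2*μ*(4*z^3)) z := by
    have := (hasDerivAt_pow 4 z).const_mul (8*π^2*μ)
    simpa using this
  have h4 := (((h2.sub_const 1).sub h1).sub h3).const_mul (1/(8*π))
  convert h4 using 1
  · rfl
  · rfl
  · funext y; simp only [Pi.sub_apply]
  have hπ : (π:ℝ) ≠ 0 := pi_ne_zero
  field_simp
  ring

lemma comp_linear_bound (G G' : ℝ → ℝ) (hG : ∀ z, HasDerivAt G (G' z) z)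
    (hG' : Continuous G') (hG0 : G 0 = 0) (M : ℝ) (hM : 0 ≤ M) :
    ∃ C, 0 ≤ C ∧ ∀ z, |z| ≤ M → ‖G z‖ ≤ C * ‖z‖ := by
  obtain ⟨C, hC⟩ := (isCompact_Icc (a := -M) (b := M)).exists_bound_of_continuousOn
    hG'.continuousOn
  refine ⟨max C 0, le_max_right _ _, fun z hz => ?_⟩
  have hzmem : z ∈ Set.Icc (-M) M := by
    rcases abs_le.1 hz with ⟨ha, hb⟩; exact ⟨ha, hb⟩
  have h0mem : (0:ℝ) ∈ Set.Icc (-M) M := ⟨by linarith, hM⟩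
  have hbb : ∀ y ∈ Set.Icc (-M) M, ‖G' y‖ ≤ max C 0 :=
    fun y hy => (hC y hy).trans (le_max_left _ _)
  have := (convex_Icc (-M) M).norm_image_sub_le_of_norm_hasDerivWithin_le
    (fun y hy => (hG y).hasDerivWithinAt) hbb h0mem hzmem
  simpa [hG0] using this

end PohAux

open PohAux

/-- Pohozaev identity `(ω/2)‖φ‖² = ∫ F_μ(φ)` for Schwartz solutions of the
profile equation `−Δφ + ωφ = (e^{4πφ²} − 1 − 4πμφ²)φ`. -/
theorem stmt10 (ω μ : ℝ) (hω : 0 < ω) (hμ : μ = 0 ∨ μ = 1)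
    (φ : SchwartzMap (EuclideanSpace ℝ (Fin 2)) ℝ)
    (heq : ∀ x : EuclideanSpace ℝ (Fin 2),
      -lap (⇑φ) x + ω * φ x =
        (exp (4 * π * φ x ^ 2) - 1 - 4 * π * μ * φ x ^ 2) * φ x) :
    (ω / 2) * (∫ x : EuclideanSpace ℝ (Fin 2), (φ x) ^ 2) =
      ∫ x : EuclideanSpace ℝ (Fin 2),
        (1 / (8 * π)) * (exp (4 * π * φ x ^ 2) - 1 - 4 * π * φ x ^ 2 -
          8 * π ^ 2 * μ * φ x ^ 4) := by
  classical
  set D : Fin 2 → SchwartzMap (EuclideanSpace ℝ (Fin 2)) ℝ :=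
    fun i => LineDeriv.lineDerivOp (EuclideanSpace.single i (1:ℝ)) φ with hDdef
  set DD : Fin 2 → Fin 2 → SchwartzMap (EuclideanSpace ℝ (Fin 2)) ℝ :=
    fun i j => LineDeriv.lineDerivOp (EuclideanSpace.single i (1:ℝ)) (D j) with hDDdef
  have hpdφ : ∀ i, pd i ⇑φ = ⇑(D i) := fun i => funext fun x => rfl
  have hpdD : ∀ i j, pd i ⇑(D j) = ⇑(DD i j) := fun i j => funext fun x => rfl
  have hdφ : Differentiable ℝ ⇑φ := φ.differentiable
  have hdD : ∀ i, Differentiable ℝ ⇑(D i) := fun i => (D i).differentiable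
  set N : SchwartzMap (EuclideanSpace ℝ (Fin 2)) ℝ := ω • φ - (DD 0 0 + DD 1 1) with hNdef
  have hNx : ∀ x, N x = ω * φ x - (DD 0 0 x + DD 1 1 x) := by
    intro x
    rw [hNdef]
    rw [SchwartzMap.sub_apply, SchwartzMap.add_apply, SchwartzMap.smul_apply]
    norm_num
  have hlap : ∀ x, lap ⇑φ x = DD 0 0 x + DD 1 1 x := by
    intro x
    rw [lap, hpdφ 0, hpdφ 1, hpdD 0 0, hpdD 1 1]
  have hNf : ∀ x, N x = (exp (4*π*φ x^2) - 1 - 4*π*μ*φ x^2) * φ x := by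
    intro x
    rw [hNx x, ← heq x, hlap x]
    ring
  -- the nonlinearity
  set Fm : ℝ → ℝ :=
    fun z => 1/(8*π) * (exp (4*π*z^2) - 1 - 4*π*z^2 - 8*π^2*μ*z^4) with hFmdef
  set fm : ℝ → ℝ := fun z => (exp (4*π*z^2) - 1 - 4*π*μ*z^2) * z with hfmdef
  have hFm' : ∀ z, HasDerivAt Fm (fm z) z := fun z => hasDerivAt_Fm μ z
  have hdFm : Differentiable ℝ Fm := fun z => (hFm' z).differentiableAt
  have hFm0 : Fm 0 = 0 := by
    rw [hFmdef]; norm_num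
  have hcontfm : Continuous fm := by
    rw [hfmdef]; fun_prop
  have hfmN : ∀ x : EuclideanSpace ℝ (Fin 2), fm (φ x) = N x := by
    intro x
    simp only [hfmdef]
    exact (hNf x).symm
  obtain ⟨Mφ, hMφ0, hMφ⟩ := schwartz_sup φ
  obtain ⟨Cf, hCf0, hCf⟩ := comp_linear_bound Fm fm hFm' hcontfm hFm0 Mφ hMφ0
  have hFmb : ∀ x : EuclideanSpace ℝ (Fin 2), ‖Fm (φ x)‖ ≤ Cf * ‖φ x‖ := by
    intro x
    apply hCf
    rw [← Real.norm_eq_abs]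
    exact hMφ x
  -- integrability of the composed nonlinearity
  have hIF : Integrable (fun x : EuclideanSpace ℝ (Fin 2) => Fm (φ x)) volume := by
    apply integ_major _ ((hdFm.continuous.comp φ.continuous).aestronglyMeasurable) φ Cf
    intro x
    calc ‖Fm (φ x)‖ ≤ Cf * ‖φ x‖ := hFmb x
      _ ≤ Cf * ((1 + ‖x‖) * ‖φ x‖) := by
          nlinarith [norm_nonneg x, norm_nonneg (φ x), hCf0,
            mul_nonneg (mul_nonneg hCf0 (norm_nonneg x)) (norm_nonneg (φ x))]
  have hIFc : ∀ i : Fin 2,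
      Integrable (fun x : EuclideanSpace ℝ (Fin 2) => x i * Fm (φ x)) volume := by
    intro i
    apply integ_major _ (((cont_coord i).mul
      (hdFm.continuous.comp φ.continuous)).aestronglyMeasurable) φ Cf
    intro x
    rw [Pi.mul_apply, Function.comp_apply, norm_mul]
    calc ‖x i‖ * ‖Fm (φ x)‖ ≤ (1 + ‖x‖) * (Cf * ‖φ x‖) := by
          apply mul_le_mul
          · rw [Real.norm_eq_abs]; linarith [coord_abs_le x i, norm_nonneg x]
          · exact hFmb x
          · exact norm_nonneg _
          · positivity
      _ = Cf * ((1 + ‖x‖) * ‖φ x‖) := by ring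
  -- Step 1 : ∫ xᵢ N ∂ᵢφ = - ∫ Fm(φ)
  have step1 : ∀ i : Fin 2,
      (∫ x : EuclideanSpace ℝ (Fin 2), x i * (N x * D i x)) =
        - ∫ x : EuclideanSpace ℝ (Fin 2), Fm (φ x) := by
    intro i
    have hpdg : pd i (fun x => Fm (φ x)) = fun x => N x * D i x := by
      rw [pd_comp i Fm fm hFm' ⇑φ hdφ]
      funext x
      rw [hpdφ i, hfmN x]
    have h4 : Integrable
        (fun x : EuclideanSpace ℝ (Fin 2) => x i * pd i (fun x => Fm (φ x)) x) volume := by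
      simp only [hpdg]
      exact key_int i N (D i)
    have := ibp_mul i (fun x => Fm (φ x)) (hdFm.comp hdφ) hIF (hIFc i) h4
    rw [hpdg] at this
    exact this
  -- Step 2 : ∫ xᵢ φ ∂ᵢφ  (two copies) = - ∫ φ²
  have step2 : ∀ i : Fin 2,
      (∫ x : EuclideanSpace ℝ (Fin 2), x i * (φ x * D i x)) +
      (∫ x : EuclideanSpace ℝ (Fin 2), x i * (φ x * D i x)) =
        - ∫ x : EuclideanSpace ℝ (Fin 2), φ x * φ x := by
    intro i
    have hpdg : pd i (fun x => φ x * φ x) = fun x => D i x * φ x + φ x * D i x := by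
      rw [pd_mul i ⇑φ ⇑φ hdφ hdφ, hpdφ i]
    have hsplit : (fun x : EuclideanSpace ℝ (Fin 2) => x i * pd i (fun x => φ x * φ x) x)
        = fun x => x i * (φ x * D i x) + x i * (φ x * D i x) := by
      simp only [hpdg]; funext x; ring
    have h4 : Integrable
        (fun x : EuclideanSpace ℝ (Fin 2) => x i * pd i (fun x => φ x * φ x) x) volume := by
      rw [hsplit]
      exact (key_int i φ (D i)).add (key_int i φ (D i))
    have := ibp_mul i (fun x => φ x * φ x) (hdφ.mul hdφ) (plain_int φ φ)
      (key_int i φ φ) h4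
    rw [hsplit, integral_add (key_int i φ (D i)) (key_int i φ (D i))] at this
    exact this
  -- Step 4 : ∫ xᵢ ∂ⱼφ ∂ᵢ∂ⱼφ (two copies) = - ∫ (∂ⱼφ)²
  have step4 : ∀ i j : Fin 2,
      (∫ x : EuclideanSpace ℝ (Fin 2), x i * (D j x * DD i j x)) +
      (∫ x : EuclideanSpace ℝ (Fin 2), x i * (D j x * DD i j x)) =
        - ∫ x : EuclideanSpace ℝ (Fin 2), D j x * D j x := by
    intro i j
    have hpdg : pd i (fun x => D j x * D j x)
        = fun x => DD i j x * D j x + D j x * DD i j x := by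
      rw [pd_mul i ⇑(D j) ⇑(D j) (hdD j) (hdD j), hpdD i j]
    have hsplit : (fun x : EuclideanSpace ℝ (Fin 2) =>
          x i * pd i (fun x => D j x * D j x) x)
        = fun x => x i * (D j x * DD i j x) + x i * (D j x * DD i j x) := by
      simp only [hpdg]; funext x; ring
    have h4 : Integrable (fun x : EuclideanSpace ℝ (Fin 2) =>
        x i * pd i (fun x => D j x * D j x) x) volume := by
      rw [hsplit]
      exact (key_int i (D j) (DD i j)).add (key_int i (D j) (DD i j))
    have := ibp_mul i (fun x => D j x * D j x) ((hdD j).mul (hdD j))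
      (plain_int (D j) (D j)) (key_int i (D j) (D j)) h4
    rw [hsplit, integral_add (key_int i (D j) (DD i j)) (key_int i (D j) (DD i j))] at this
    exact this
  -- symmetry of second derivatives
  have hcomm : ∀ i j : Fin 2, ⇑(DD j i) = ⇑(DD i j) := by
    intro i j
    funext x
    rw [← hpdD j i, ← hpdD i j, ← hpdφ i, ← hpdφ j]
    exact pd_comm φ j i x
  -- Step 3 : ∫ ∂ⱼ(∂ⱼφ · xᵢ ∂ᵢφ) = 0, expanded
  have step3 : ∀ i j : Fin 2,
      (∫ x : EuclideanSpace ℝ (Fin 2), x i * (DD j j x * D i x)) +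
      ((if i = j then (∫ x : EuclideanSpace ℝ (Fin 2), D j x * D i x) else 0) +
      (∫ x : EuclideanSpace ℝ (Fin 2), x i * (D j x * DD i j x))) = 0 := by
    intro i j
    have hinner : pd j (fun y : EuclideanSpace ℝ (Fin 2) => y i * D i y)
        = fun x => (if i = j then (1:ℝ) else 0) * D i x + x i * DD j i x := by
      rw [pd_mul j (fun y => y i) ⇑(D i) (diff_coord i) (hdD i)]
      funext x
      rw [hpdD j i]
      have : pd j (fun y : EuclideanSpace ℝ (Fin 2) => y i) x
          = (if i = j then (1:ℝ) else 0) := by rw [pd_proj i j]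
      rw [this]
    have hpdw : pd j (fun x : EuclideanSpace ℝ (Fin 2) => D j x * (x i * D i x))
        = fun x => DD j j x * (x i * D i x) +
            D j x * ((if i = j then (1:ℝ) else 0) * D i x + x i * DD j i x) := by
      rw [pd_mul j ⇑(D j) (fun y => y i * D i y) (hdD j) ((diff_coord i).mul (hdD i)),
        hpdD j j, hinner]
    have hsplit : pd j (fun x : EuclideanSpace ℝ (Fin 2) => D j x * (x i * D i x))
        = fun x => x i * (DD j j x * D i x) +
            ((if i = j then (1:ℝ) else 0) * (D j x * D i x) + x i * (D j x * DD j i x)) := by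
      rw [hpdw]; funext x; ring
    have hIB : Integrable (fun x : EuclideanSpace ℝ (Fin 2) =>
        (if i = j then (1:ℝ) else 0) * (D j x * D i x)) volume :=
      (plain_int (D j) (D i)).const_mul _
    have hIC : Integrable (fun x : EuclideanSpace ℝ (Fin 2) =>
        x i * (D j x * DD j i x)) volume := key_int i (D j) (DD j i)
    have hIA : Integrable (fun x : EuclideanSpace ℝ (Fin 2) =>
        x i * (DD j j x * D i x)) volume := key_int i (DD j j) (D i)
    have hw_eq : (fun x : EuclideanSpace ℝ (Fin 2) => D j x * (x i * D i x))
        = fun x => x i * (D j x * D i x) := by funext x; ring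
    have hIw : Integrable
        (fun x : EuclideanSpace ℝ (Fin 2) => D j x * (x i * D i x)) volume := by
      rw [hw_eq]; exact key_int i (D j) (D i)
    have hIBC : Integrable (fun x : EuclideanSpace ℝ (Fin 2) =>
        (if i = j then (1:ℝ) else 0) * (D j x * D i x) + x i * (D j x * DD j i x)) volume :=
      hIB.add hIC
    have hIpdw : Integrable
        (pd j (fun x : EuclideanSpace ℝ (Fin 2) => D j x * (x i * D i x))) volume := by
      rw [hsplit]
      exact hIA.add hIBC
    have hzero := ibp_zero j (fun x => D j x * (x i * D i x))
      ((hdD j).mul ((diff_coord i).mul (hdD i))) hIw hIpdw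
    rw [hsplit, integral_add hIA hIBC, integral_add hIB hIC] at hzero
    -- clean the if-integral and the commuted second derivative
    have hBval : (∫ x : EuclideanSpace ℝ (Fin 2),
        (if i = j then (1:ℝ) else 0) * (D j x * D i x))
        = (if i = j then (∫ x : EuclideanSpace ℝ (Fin 2), D j x * D i x) else 0) := by
      split_ifs with h
      · simp
      · simp
    have hCval : (∫ x : EuclideanSpace ℝ (Fin 2), x i * (D j x * DD j i x))
        = ∫ x : EuclideanSpace ℝ (Fin 2), x i * (D j x * DD i j x) := by
      rw [hcomm i j]
    rw [hBval, hCval] at hzero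
    exact hzero
  -- linear decomposition of the N-term
  have hLdecomp : ∀ i : Fin 2,
      (∫ x : EuclideanSpace ℝ (Fin 2), x i * (N x * D i x)) =
        ω * (∫ x : EuclideanSpace ℝ (Fin 2), x i * (φ x * D i x)) -
        (∫ x : EuclideanSpace ℝ (Fin 2), x i * (DD 0 0 x * D i x)) -
        (∫ x : EuclideanSpace ℝ (Fin 2), x i * (DD 1 1 x * D i x)) := by
    intro i
    have hfun : (fun x : EuclideanSpace ℝ (Fin 2) => x i * (N x * D i x))
        = fun x => ω * (x i * (φ x * D i x)) - x i * (DD 0 0 x * D i x)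
            - x i * (DD 1 1 x * D i x) := by
      funext x
      rw [hNx x]
      ring
    have hI1 : Integrable (fun x : EuclideanSpace ℝ (Fin 2) =>
        ω * (x i * (φ x * D i x))) volume := (key_int i φ (D i)).const_mul ω
    have hI2 : Integrable (fun x : EuclideanSpace ℝ (Fin 2) =>
        x i * (DD 0 0 x * D i x)) volume := key_int i (DD 0 0) (D i)
    have hI3 : Integrable (fun x : EuclideanSpace ℝ (Fin 2) =>
        x i * (DD 1 1 x * D i x)) volume := key_int i (DD 1 1) (D i)
    have hI12 : Integrable (fun x : EuclideanSpace ℝ (Fin 2) =>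
        ω * (x i * (φ x * D i x)) - x i * (DD 0 0 x * D i x)) volume := hI1.sub hI2
    rw [hfun]
    rw [integral_sub hI12 hI3, integral_sub hI1 hI2, integral_const_mul]
  -- assemble everything
  have hgoalR : (∫ x : EuclideanSpace ℝ (Fin 2),
      (1 / (8 * π)) * (exp (4 * π * φ x ^ 2) - 1 - 4 * π * φ x ^ 2 -
        8 * π ^ 2 * μ * φ x ^ 4)) = ∫ x : EuclideanSpace ℝ (Fin 2), Fm (φ x) := rfl
  have hgoalL : (fun x : EuclideanSpace ℝ (Fin 2) => (φ x) ^ 2)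
      = fun x => φ x * φ x := by funext x; ring
  rw [hgoalR, hgoalL]
  have e10 := step1 0
  have e11 := step1 1
  have e20 := step2 0
  have e21 := step2 1
  have e400 := step4 0 0
  have e401 := step4 0 1
  have e410 := step4 1 0
  have e411 := step4 1 1
  have e300 := step3 0 0
  have e301 := step3 0 1
  have e310 := step3 1 0
  have e311 := step3 1 1
  rw [if_pos rfl] at e300 e311
  rw [if_neg (by decide)] at e301 e310
  have d0 := hLdecomp 0
  have d1 := hLdecomp 1
  rw [d0] at e10
  rw [d1] at e11
  linear_combination (-1/2 : ℝ) * e10 - (1/2 : ℝ) * e11 + (ω/4) * e20 + (ω/4) * e21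
    - (1/2 : ℝ) * e300 - (1/2 : ℝ) * e301 - (1/2 : ℝ) * e310 - (1/2 : ℝ) * e311
    + (1/4 : ℝ) * e400 + (1/4 : ℝ) * e401 + (1/4 : ℝ) * e410 + (1/4 : ℝ) * e411
end

section
/- Let ω > 0, μ ∈ {0,1}, and let φ : ℝ² → ℝ be a Schwartz function satisfying the profile equation −Δφ + ωφ = (e^{4πφ²} − 1 − 4πμφ²)φ pointwise on ℝ². Then ∫_{ℝ²} ( |∇φ|² + ωφ² − (e^{4πφ²}(8πφ² + 1) − 1 − 12πμφ²)·φ² ) dx = −8π·∫_{ℝ²} (e^{4πφ²} − μ)·φ⁴ dx. Moreover, if φ is not identically zero then this quantity is strictly negative; i.e., the quadratic form ⟨L₊φ, φ⟩ of the linearized operator L₊ at φ is strictly negative. -/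
open Real MeasureTheory

namespace Stmt13Aux

abbrev E2 := EuclideanSpace ℝ (Fin 2)

lemma schwartz_temperate (g : SchwartzMap E2 ℝ) : Function.HasTemperateGrowth ⇑g := by
  refine ⟨g.smooth', fun n => ⟨0, SchwartzMap.seminorm ℝ 0 n g, fun x => ?_⟩⟩
  simpa using g.norm_iteratedFDeriv_le_seminorm ℝ n x

/-- Pointwise product of two Schwartz functions, as a Schwartz function. -/
noncomputable def schMul (f g : SchwartzMap E2 ℝ) : SchwartzMap E2 ℝ :=
  SchwartzMap.bilinLeftCLM (ContinuousLinearMap.mul ℝ ℝ) (schwartz_temperate g) f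

@[simp] lemma schMul_apply (f g : SchwartzMap E2 ℝ) (x : E2) :
    schMul f g x = f x * g x := rfl

lemma mul_integrable (f g : SchwartzMap E2 ℝ) :
    Integrable (fun x => f x * g x) (volume : Measure E2) := by
  exact (schMul f g).integrable (μ := (volume : Measure E2))

/-- partial derivative of a Schwartz function as a Schwartz function -/
noncomputable def sder (i : Fin 2) (f : SchwartzMap E2 ℝ) : SchwartzMap E2 ℝ :=
  SchwartzMap.evalCLM ℝ E2 ℝ (EuclideanSpace.single i 1) (SchwartzMap.fderivCLM ℝ E2 ℝ f)

lemma sder_eq (i : Fin 2) (f : SchwartzMap E2 ℝ) : ⇑(sder i f) = pd i ⇑f := by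
  funext x
  simp [sder, SchwartzMap.fderivCLM_apply, pd]

/-- Integration by parts: `∫ φ ∂ᵢ∂ᵢφ = - ∫ (∂ᵢφ)²`. -/
lemma ibp (i : Fin 2) (f : SchwartzMap E2 ℝ) :
    (∫ x : E2, f x * pd i (pd i ⇑f) x) = - ∫ x : E2, pd i ⇑f x * pd i ⇑f x := by
  have e1 : pd i ⇑f = ⇑(sder i f) := (sder_eq i f).symm
  have e2 : ∀ x : E2, fderiv ℝ ⇑f x (EuclideanSpace.single i 1) = sder i f x :=
    fun x => congrFun e1 x
  have e3 : ∀ x : E2, fderiv ℝ ⇑(sder i f) x (EuclideanSpace.single i 1)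
      = sder i (sder i f) x := fun x => congrFun (sder_eq i (sder i f)).symm x
  rw [e1]
  simp only [pd]
  have h1 : Integrable (fun x : E2 =>
      fderiv ℝ ⇑f x (EuclideanSpace.single i 1) * sder i f x) volume := by
    have : (fun x : E2 => fderiv ℝ ⇑f x (EuclideanSpace.single i 1) * sder i f x)
        = fun x => sder i f x * sder i f x := by funext x; rw [e2 x]
    rw [this]; exact mul_integrable _ _
  have h2 : Integrable (fun x : E2 =>
      f x * fderiv ℝ ⇑(sder i f) x (EuclideanSpace.single i 1)) volume := by
    have : (fun x : E2 => f x * fderiv ℝ ⇑(sder i f) x (EuclideanSpace.single i 1))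
        = fun x => f x * sder i (sder i f) x := by funext x; rw [e3 x]
    rw [this]; exact mul_integrable _ _
  have h3 : Integrable (fun x : E2 => f x * sder i f x) volume := mul_integrable _ _
  have key := integral_mul_fderiv_eq_neg_fderiv_mul_of_integrable
    (μ := (volume : Measure E2)) (f := ⇑f) (g := ⇑(sder i f))
    (v := EuclideanSpace.single i 1) h1 h2 h3 (fun x _ => f.differentiableAt) (fun x _ => (sder i f).differentiableAt)
  rw [key]
  simp only [e2]

end Stmt13Aux

open Stmt13Aux

/-- For a Schwartz solution `φ` of the profile equation, the quadratic form
`⟨L₊φ, φ⟩` equals `−8π ∫ (e^{4πφ²} − μ)φ⁴` and is strictly negative if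
`φ ≢ 0`. -/
theorem stmt13 (ω μ : ℝ) (hω : 0 < ω) (hμ : μ = 0 ∨ μ = 1)
    (φ : SchwartzMap (EuclideanSpace ℝ (Fin 2)) ℝ)
    (heq : ∀ x : EuclideanSpace ℝ (Fin 2),
      -lap (⇑φ) x + ω * φ x =
        (exp (4 * π * φ x ^ 2) - 1 - 4 * π * μ * φ x ^ 2) * φ x) :
    (∫ x : EuclideanSpace ℝ (Fin 2),
        ((pd 0 (⇑φ) x) ^ 2 + (pd 1 (⇑φ) x) ^ 2 + ω * (φ x) ^ 2 -
          (exp (4 * π * φ x ^ 2) * (8 * π * φ x ^ 2 + 1) - 1 -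
            12 * π * μ * φ x ^ 2) * (φ x) ^ 2)) =
      -(8 * π) * (∫ x : EuclideanSpace ℝ (Fin 2),
        (exp (4 * π * φ x ^ 2) - μ) * (φ x) ^ 4) ∧
    ((∃ x : EuclideanSpace ℝ (Fin 2), φ x ≠ 0) →
      (∫ x : EuclideanSpace ℝ (Fin 2),
        ((pd 0 (⇑φ) x) ^ 2 + (pd 1 (⇑φ) x) ^ 2 + ω * (φ x) ^ 2 -
          (exp (4 * π * φ x ^ 2) * (8 * π * φ x ^ 2 + 1) - 1 -
            12 * π * μ * φ x ^ 2) * (φ x) ^ 2)) < 0) := by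
  have hμ1 : μ ≤ 1 := by rcases hμ with h | h <;> simp [h]
  have hμ0 : 0 ≤ μ := by rcases hμ with h | h <;> simp [h]
  set G : E2 → ℝ := fun x => (exp (4 * π * φ x ^ 2) - μ) * (φ x) ^ 4 with hG
  -- integrability of G
  have hGcont : Continuous G := by
    apply Continuous.mul
    · exact (Real.continuous_exp.comp (by continuity)).sub continuous_const
    · exact (φ.continuous).pow 4
  set M : ℝ := SchwartzMap.seminorm ℝ 0 0 φ with hM
  have hMb : ∀ x : E2, |φ x| ≤ M := fun x => by
    simpa [Real.norm_eq_abs] using φ.norm_le_seminorm ℝ x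
  have hGint : Integrable G (volume : Measure E2) := by
    refine Integrable.mono' ((mul_integrable (schMul φ φ) (schMul φ φ)).const_mul
      (exp (4 * π * M ^ 2) + 1)) hGcont.aestronglyMeasurable
      (Filter.Eventually.of_forall fun x => ?_)
    have h1 : exp (4 * π * φ x ^ 2) ≤ exp (4 * π * M ^ 2) := by
      apply Real.exp_le_exp.2
      have : φ x ^ 2 ≤ M ^ 2 := by
        have := hMb x
        nlinarith [abs_nonneg (φ x), sq_abs (φ x)]
      nlinarith [Real.pi_pos]
    have h2 : |exp (4 * π * φ x ^ 2) - μ| ≤ exp (4 * π * M ^ 2) + 1 := by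
      rw [abs_le]
      constructor
      · nlinarith [Real.exp_pos (4 * π * φ x ^ 2), Real.exp_pos (4 * π * M ^ 2)]
      · nlinarith [Real.exp_pos (4 * π * φ x ^ 2)]
    have h3 : schMul φ φ x * schMul φ φ x = (φ x) ^ 4 := by simp; ring
    calc ‖G x‖ = |exp (4 * π * φ x ^ 2) - μ| * (φ x) ^ 4 := by
          rw [hG, Real.norm_eq_abs, abs_mul, abs_of_nonneg (by positivity : (0:ℝ) ≤ (φ x)^4)]
      _ ≤ (exp (4 * π * M ^ 2) + 1) * (φ x) ^ 4 := by
          apply mul_le_mul_of_nonneg_right h2 (by positivity)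
      _ = (exp (4 * π * M ^ 2) + 1) * (schMul φ φ x * schMul φ φ x) := by rw [h3]
  -- pointwise identity for the integrand
  have key : ∀ x : E2,
      ((pd 0 (⇑φ) x) ^ 2 + (pd 1 (⇑φ) x) ^ 2 + ω * (φ x) ^ 2 -
          (exp (4 * π * φ x ^ 2) * (8 * π * φ x ^ 2 + 1) - 1 -
            12 * π * μ * φ x ^ 2) * (φ x) ^ 2)
        = pd 0 (⇑φ) x * pd 0 (⇑φ) x + pd 1 (⇑φ) x * pd 1 (⇑φ) x
          + φ x * pd 0 (pd 0 ⇑φ) x + φ x * pd 1 (pd 1 ⇑φ) x + (-(8 * π)) * G x := by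
    intro x
    have h := heq x
    simp only [lap] at h
    simp only [hG]
    linear_combination (φ x) * h
  -- integrability of the pieces
  have i1 : Integrable (fun x : E2 => pd 0 (⇑φ) x * pd 0 (⇑φ) x) volume := by
    simpa [sder_eq] using mul_integrable (sder 0 φ) (sder 0 φ)
  have i2 : Integrable (fun x : E2 => pd 1 (⇑φ) x * pd 1 (⇑φ) x) volume := by
    simpa [sder_eq] using mul_integrable (sder 1 φ) (sder 1 φ)
  have i3 : Integrable (fun x : E2 => φ x * pd 0 (pd 0 ⇑φ) x) volume := by
    simpa [sder_eq] using mul_integrable φ (sder 0 (sder 0 φ))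
  have i4 : Integrable (fun x : E2 => φ x * pd 1 (pd 1 ⇑φ) x) volume := by
    simpa [sder_eq] using mul_integrable φ (sder 1 (sder 1 φ))
  have i5 : Integrable (fun x : E2 => (-(8 * π)) * G x) volume := hGint.const_mul _
  have main : (∫ x : EuclideanSpace ℝ (Fin 2),
        ((pd 0 (⇑φ) x) ^ 2 + (pd 1 (⇑φ) x) ^ 2 + ω * (φ x) ^ 2 -
          (exp (4 * π * φ x ^ 2) * (8 * π * φ x ^ 2 + 1) - 1 -
            12 * π * μ * φ x ^ 2) * (φ x) ^ 2)) =
      -(8 * π) * (∫ x : EuclideanSpace ℝ (Fin 2), G x) := by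
    have i12 : Integrable (fun x : E2 =>
        pd 0 (⇑φ) x * pd 0 (⇑φ) x + pd 1 (⇑φ) x * pd 1 (⇑φ) x) volume := i1.add i2
    have i123 : Integrable (fun x : E2 =>
        pd 0 (⇑φ) x * pd 0 (⇑φ) x + pd 1 (⇑φ) x * pd 1 (⇑φ) x
          + φ x * pd 0 (pd 0 ⇑φ) x) volume := i12.add i3
    have i1234 : Integrable (fun x : E2 =>
        pd 0 (⇑φ) x * pd 0 (⇑φ) x + pd 1 (⇑φ) x * pd 1 (⇑φ) x
          + φ x * pd 0 (pd 0 ⇑φ) x + φ x * pd 1 (pd 1 ⇑φ) x) volume := i123.add i4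
    rw [integral_congr_ae (Filter.Eventually.of_forall key),
        integral_add i1234 i5, integral_add i123 i4, integral_add i12 i3,
        integral_add i1 i2, integral_const_mul, ibp 0 φ, ibp 1 φ]
    ring
  refine ⟨main, fun hx0 => ?_⟩
  rw [main]
  rcases hx0 with ⟨x₀, hx₀⟩
  have hnn : (0:E2 → ℝ) ≤ᵐ[volume] G := by
    refine Filter.Eventually.of_forall fun x => ?_
    have h1 : (1:ℝ) ≤ exp (4 * π * φ x ^ 2) := Real.one_le_exp (by positivity)
    have h2 : 0 ≤ exp (4 * π * φ x ^ 2) - μ := by linarith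
    exact mul_nonneg h2 (by positivity)
  have hGpos : 0 < ∫ x : E2, G x := by
    rw [integral_pos_iff_support_of_nonneg_ae hnn hGint]
    have hopen : IsOpen (G ⁻¹' Set.Ioi 0) := isOpen_Ioi.preimage hGcont
    have hsq : (0:ℝ) < φ x₀ ^ 2 := by
      rcases lt_or_gt_of_ne hx₀ with h | h <;> nlinarith
    have hx0G : G x₀ ∈ Set.Ioi (0:ℝ) := by
      have h1 : (1:ℝ) < exp (4 * π * φ x₀ ^ 2) :=
        Real.one_lt_exp_iff.2 (by nlinarith [Real.pi_pos])
      have h2 : (0:ℝ) < (φ x₀) ^ 4 := by nlinarith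
      have h3 : 0 < exp (4 * π * φ x₀ ^ 2) - μ := by linarith
      exact mul_pos h3 h2
    have hsub : G ⁻¹' Set.Ioi 0 ⊆ Function.support G := fun x hx => by
      simp only [Function.mem_support]
      exact ne_of_gt hx
    exact lt_of_lt_of_le (hopen.measure_pos volume ⟨x₀, hx0G⟩) (measure_mono hsub)
  have h8π : (0:ℝ) < 8 * π := by positivity
  have := mul_pos h8π hGpos
  linarith
end

section
/- Let ω > 0, μ ∈ {0,1}, and let φ : ℝ² → ℝ be a Schwartz function satisfying the profile equation −Δφ + ωφ = (e^{4πφ²} − 1 − 4πμφ²)φ pointwise on ℝ², and set Ψ = x·∇φ + φ. Then ∫_{ℝ²} ( |∇Ψ|² + ωΨ² − (e^{4πφ²}(8πφ² + 1) − 1 − 12πμφ²)·Ψ² ) dx = −∫_{ℝ²} ( e^{4πφ(x)²}(8πφ(x)⁴ + 1/π − 4φ(x)²) − 1/π ) dx, and this quantity is ≤ 0, with strict inequality if φ is not identically zero. -/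
open Real MeasureTheory

/-- The radial derivative `x·∇g = x₁∂₁g + x₂∂₂g` on `ℝ²`. -/
noncomputable def rad (g : EuclideanSpace ℝ (Fin 2) → ℝ)
    (x : EuclideanSpace ℝ (Fin 2)) : ℝ :=
  x 0 * pd 0 g x + x 1 * pd 1 g x

local notation "E2" => EuclideanSpace ℝ (Fin 2)

noncomputable def ee (i : Fin 2) : E2 := EuclideanSpace.single i 1

lemma ee_apply (i j : Fin 2) : (ee i) j = if j = i then 1 else 0 := by
  simp [ee, EuclideanSpace.single_apply]

lemma pd_eq_fderiv (i : Fin 2) (g : E2 → ℝ) (x : E2) :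
    pd i g x = fderiv ℝ g x (ee i) := rfl

lemma coord_eq_proj (j : Fin 2) :
    (fun x : E2 => x j) = ⇑(PiLp.proj (𝕜 := ℝ) 2 (fun _ : Fin 2 => ℝ) j) := rfl

lemma diff_coord (j : Fin 2) : Differentiable ℝ (fun x : E2 => x j) := by
  rw [coord_eq_proj]; exact (PiLp.proj (𝕜 := ℝ) 2 (fun _ : Fin 2 => ℝ) j).differentiable

lemma pd_coord (i j : Fin 2) (x : E2) : pd i (fun x : E2 => x j) x = (ee i) j := by
  rw [pd_eq_fderiv, coord_eq_proj, ContinuousLinearMap.fderiv]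
  rfl

lemma pd_add {a b : E2 → ℝ} (ha : Differentiable ℝ a) (hb : Differentiable ℝ b)
    (i : Fin 2) (x : E2) :
    pd i (fun y => a y + b y) x = pd i a x + pd i b x := by
  rw [pd_eq_fderiv, fderiv_fun_add (ha x) (hb x)]; rfl

lemma pd_sub {a b : E2 → ℝ} (ha : Differentiable ℝ a) (hb : Differentiable ℝ b)
    (i : Fin 2) (x : E2) :
    pd i (fun y => a y - b y) x = pd i a x - pd i b x := by
  rw [pd_eq_fderiv, fderiv_fun_sub (ha x) (hb x)]; rfl

lemma pd_mul {a b : E2 → ℝ} (ha : Differentiable ℝ a) (hb : Differentiable ℝ b)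
    (i : Fin 2) (x : E2) :
    pd i (fun y => a y * b y) x = pd i a x * b x + a x * pd i b x := by
  rw [pd_eq_fderiv, fderiv_fun_mul (ha x) (hb x)]; simp [pd_eq_fderiv]; ring

lemma pd_const_mul {a : E2 → ℝ} (ha : Differentiable ℝ a) (c : ℝ) (i : Fin 2) (x : E2) :
    pd i (fun y => c * a y) x = c * pd i a x := by
  rw [pd_eq_fderiv, fderiv_const_mul (ha x)]; rfl

lemma pd_coord_mul {a : E2 → ℝ} (ha : Differentiable ℝ a) (i j : Fin 2) (x : E2) :
    pd i (fun y => y j * a y) x = (ee i) j * a x + x j * pd i a x := by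
  rw [show (fun y : E2 => y j * a y) = fun y => (fun z : E2 => z j) y * a y from rfl,
    pd_mul (diff_coord j) ha, pd_coord]

lemma pd_comp {h h' : ℝ → ℝ} (hh : ∀ z, HasDerivAt h (h' z) z)
    {a : E2 → ℝ} (ha : Differentiable ℝ a) (i : Fin 2) (x : E2) :
    pd i (fun y => h (a y)) x = h' (a x) * pd i a x := by
  have H : HasFDerivAt (fun y => h (a y)) (h' (a x) • fderiv ℝ a x) x :=
    (hh (a x)).comp_hasFDerivAt x (ha x).hasFDerivAt
  rw [pd_eq_fderiv, H.fderiv]; rfl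

lemma pd_congr {a b : E2 → ℝ} (h : ∀ x, a x = b x) (i : Fin 2) (x : E2) :
    pd i a x = pd i b x := by
  have : a = b := funext h
  rw [this]

lemma pd_schwartz (S : SchwartzMap E2 ℝ) (i : Fin 2) (x : E2) :
    pd i (⇑S) x = LineDeriv.lineDerivOpCLM ℝ (SchwartzMap E2 ℝ) (F := SchwartzMap E2 ℝ) (ee i) S x :=
  (SchwartzMap.lineDerivOp_apply_eq_fderiv (ee i) S x).symm

-- symmetry of second derivatives
lemma pd_pd_symm {u : E2 → ℝ} (hu : ContDiff ℝ ((⊤ : ℕ∞) : WithTop ℕ∞) u) (i j : Fin 2) (x : E2) :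
    pd i (pd j u) x = pd j (pd i u) x := by
  have hd : DifferentiableAt ℝ (fderiv ℝ u) x := by
    have := (hu.fderiv_right (m := ((⊤ : ℕ∞) : WithTop ℕ∞)) (by exact_mod_cast le_top)).differentiable
      (by simp)
    exact this x
  have key : ∀ v w : E2, fderiv ℝ (fun y => fderiv ℝ u y v) x w
      = fderiv ℝ (fderiv ℝ u) x w v := by
    intro v w
    have : (fun y => fderiv ℝ u y v)
        = fun y => (ContinuousLinearMap.apply ℝ ℝ v) (fderiv ℝ u y) := rfl
    rw [this]
    have h2 : HasFDerivAt (fun y => (ContinuousLinearMap.apply ℝ ℝ v) (fderiv ℝ u y))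
        ((ContinuousLinearMap.apply ℝ ℝ v).comp (fderiv ℝ (fderiv ℝ u) x)) x :=
      ((ContinuousLinearMap.apply ℝ ℝ v).hasFDerivAt.comp x hd.hasFDerivAt)
    rw [h2.fderiv]; rfl
  have hsymm : IsSymmSndFDerivAt ℝ u x :=
    (hu.contDiffAt).isSymmSndFDerivAt (by
      rw [minSmoothness_of_isRCLikeNormedField]
      exact (WithTop.coe_le_coe.mpr le_top : ((2:ℕ∞) : WithTop ℕ∞) ≤ ((⊤ : ℕ∞) : WithTop ℕ∞)))
  have e : ∀ k, pd k u = fun y => fderiv ℝ u y (ee k) := fun _ => rfl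
  rw [pd_eq_fderiv, pd_eq_fderiv, e, e, key, key]
  exact hsymm (ee i) (ee j)


noncomputable def fn (μ z : ℝ) : ℝ := (exp (4*π*z^2) - 1 - 4*π*μ*z^2) * z
noncomputable def fp (μ z : ℝ) : ℝ := exp (4*π*z^2) * (8*π*z^2+1) - 1 - 12*π*μ*z^2
noncomputable def Fn (μ z : ℝ) : ℝ := (exp (4*π*z^2) - 1)/(8*π) - z^2/2 - π*μ*z^4
noncomputable def Gt (ω μ z : ℝ) : ℝ := 4 * Fn μ z - ω*z^2 - z * fn μ z
noncomputable def Gp (ω μ z : ℝ) : ℝ := 3 * fn μ z - 2*ω*z - z * fp μ z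
noncomputable def gg (z : ℝ) : ℝ := exp (4*π*z^2) * (8*π*z^4 + 1/π - 4*z^2) - 1/π

lemma hasDerivAt_expq (z : ℝ) :
    HasDerivAt (fun z : ℝ => exp (4*π*z^2)) (8*π*z*exp (4*π*z^2)) z := by
  have h1 : HasDerivAt (fun z : ℝ => 4*π*z^2) (4*π*(2*z^1)) z :=
    (hasDerivAt_pow 2 z).const_mul (4*π)
  have := h1.exp
  convert this using 1
  ring

lemma hasDerivAt_fn (μ z : ℝ) : HasDerivAt (fn μ) (fp μ z) z := by
  have h1 : HasDerivAt (fun z : ℝ => exp (4*π*z^2) - 1 - 4*π*μ*z^2)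
      (8*π*z*exp (4*π*z^2) - 4*π*μ*(2*z^1)) z :=
    ((hasDerivAt_expq z).sub_const 1).sub ((hasDerivAt_pow 2 z).const_mul (4*π*μ))
  have := h1.mul (hasDerivAt_id z)
  refine this.congr_deriv ?_
  unfold fp
  simp only [id]
  ring

lemma hasDerivAt_Fn (μ z : ℝ) : HasDerivAt (Fn μ) (fn μ z) z := by
  have h1 : HasDerivAt (Fn μ)
      ((8*π*z*exp (4*π*z^2))/(8*π) - (2*z^1)/2 - π*μ*(4*z^3)) z := by
    exact (((hasDerivAt_expq z).sub_const 1).div_const (8*π)).sub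
      (((hasDerivAt_pow 2 z).div_const 2)) |>.sub ((hasDerivAt_pow 4 z).const_mul (π*μ))
  convert h1 using 1
  unfold fn
  have hπ : (π : ℝ) ≠ 0 := pi_ne_zero
  field_simp

lemma hasDerivAt_Gt (ω μ z : ℝ) : HasDerivAt (Gt ω μ) (Gp ω μ z) z := by
  have h1 : HasDerivAt (Gt ω μ)
      (4 * fn μ z - ω*(2*z^1) - (1 * fn μ z + z * fp μ z)) z := by
    exact (((hasDerivAt_Fn μ z).const_mul 4).sub
      ((hasDerivAt_pow 2 z).const_mul ω)).sub
      ((hasDerivAt_id z).mul (hasDerivAt_fn μ z))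
  convert h1 using 1
  unfold Gp
  ring

lemma gg_eq (μ z : ℝ) : gg z = fp μ z * z^2 - 5*(z*fn μ z) + 8*Fn μ z := by
  unfold gg fp fn Fn
  have hπ : (π : ℝ) ≠ 0 := pi_ne_zero
  field_simp
  ring

lemma key_alg (ω μ r z : ℝ) :
    (ω - fp μ z) * (r+z)^2 + gg z =
      (r+z)*(3*(ω*z - fn μ z) + (ω - fp μ z)*r) + Gp ω μ z * r + 2*Gt ω μ z := by
  rw [gg_eq μ z]
  unfold Gp Gt Fn fn fp
  ring

lemma gg_expr (z : ℝ) :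
    gg z = (exp (4*π*z^2) * ((4*π*z^2)^2/2 - (4*π*z^2) + 1) - 1) / π := by
  unfold gg
  have hπ : (π : ℝ) ≠ 0 := pi_ne_zero
  field_simp
  ring

lemma aux_exp_ineq (t : ℝ) (ht : 0 ≤ t) : 1 + t^4/4 ≤ exp t * (t^2/2 - t + 1) := by
  have h := Real.sum_le_exp_of_nonneg ht 3
  have h3 : 1 + t + t^2/2 ≤ exp t := by
    convert h using 1
    norm_num [Finset.sum_range_succ]
  nlinarith [sq_nonneg t, sq_nonneg (t-1), sq_nonneg (t*t - t)]

lemma gg_nonneg (z : ℝ) : 0 ≤ gg z := by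
  rw [gg_expr]
  have ht : 0 ≤ 4*π*z^2 := by positivity
  have := aux_exp_ineq _ ht
  have hπ : (0:ℝ) < π := pi_pos
  have h4 : (0:ℝ) ≤ (4*π*z^2)^4/4 := by positivity
  apply div_nonneg _ hπ.le
  nlinarith

lemma gg_pos (z : ℝ) (hz : z ≠ 0) : 0 < gg z := by
  rw [gg_expr]
  have hπ : (0:ℝ) < π := pi_pos
  have ht : 0 < 4*π*z^2 := by positivity
  have := aux_exp_ineq _ ht.le
  have h4 : (0:ℝ) < (4*π*z^2)^4/4 := by positivity
  apply div_pos _ hπ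
  nlinarith

lemma bdd_on {h : ℝ → ℝ} (hc : Continuous h) (M : ℝ) :
    ∃ K, 0 ≤ K ∧ ∀ z, |z| ≤ M → |h z| ≤ K := by
  obtain ⟨C, hC⟩ := (isCompact_Icc : IsCompact (Set.Icc (-M) M)).exists_bound_of_continuousOn
    hc.continuousOn
  refine ⟨max C 0, le_max_right _ _, fun z hz => ?_⟩
  have hz' : z ∈ Set.Icc (-M) M := by
    rcases abs_le.mp hz with ⟨h1, h2⟩; exact ⟨h1, h2⟩
  exact le_trans (hC z hz') (le_max_left _ _)

lemma lin_bound {h h' : ℝ → ℝ} (hd : ∀ z, HasDerivAt h (h' z) z) (hc : Continuous h')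
    (h0 : h 0 = 0) (M : ℝ) :
    ∃ K, 0 ≤ K ∧ ∀ z, |z| ≤ M → |h z| ≤ K * |z| := by
  obtain ⟨K, hK0, hK⟩ := bdd_on hc M
  refine ⟨K, hK0, fun z hz => ?_⟩
  have hconv : Convex ℝ (Set.Icc (-M) M) := convex_Icc _ _
  have hmem : ∀ y ∈ Set.Icc (-M) M, HasDerivWithinAt h (h' y) (Set.Icc (-M) M) y :=
    fun y _ => (hd y).hasDerivWithinAt
  have hb : ∀ y ∈ Set.Icc (-M) M, ‖h' y‖ ≤ K := fun y hy => hK y (abs_le.mpr ⟨hy.1, hy.2⟩)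
  have hzmem : z ∈ Set.Icc (-M) M := ⟨(abs_le.mp hz).1, (abs_le.mp hz).2⟩
  have h0mem : (0:ℝ) ∈ Set.Icc (-M) M := by
    constructor <;> [linarith [abs_nonneg z, hz]; linarith [abs_nonneg z, hz]]
  have := hconv.norm_image_sub_le_of_norm_hasDerivWithin_le hmem hb h0mem hzmem
  simpa [h0] using this

lemma hasDerivAt_gg (z : ℝ) :
    HasDerivAt gg (8*π*z*exp (4*π*z^2) * (8*π*z^4 + 1/π - 4*z^2)
      + exp (4*π*z^2) * (8*π*(4*z^3) - 4*(2*z^1))) z := by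
  unfold gg
  have h1 : HasDerivAt (fun z : ℝ => 8*π*z^4 + 1/π - 4*z^2)
      (8*π*(4*z^3) - 4*(2*z^1)) z := by
    have := (((hasDerivAt_pow 4 z).const_mul (8*π)).add_const (1/π)).sub
      ((hasDerivAt_pow 2 z).const_mul 4)
    exact this.congr_deriv (by norm_num)
  exact ((hasDerivAt_expq z).mul h1).sub_const (1/π)

lemma gg_lin_bound (M : ℝ) : ∃ K, 0 ≤ K ∧ ∀ z, |z| ≤ M → |gg z| ≤ K * |z| := by
  apply lin_bound hasDerivAt_gg
  · continuity
  · simp [gg]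

noncomputable def Pd (φ : SchwartzMap E2 ℝ) (i : Fin 2) : SchwartzMap E2 ℝ :=
  LineDeriv.lineDerivOpCLM ℝ (SchwartzMap E2 ℝ) (F := SchwartzMap E2 ℝ) (ee i) φ

noncomputable def Qd (φ : SchwartzMap E2 ℝ) (i j : Fin 2) : SchwartzMap E2 ℝ :=
  Pd (Pd φ j) i

noncomputable def Rd (φ : SchwartzMap E2 ℝ) (i j k : Fin 2) : SchwartzMap E2 ℝ :=
  Pd (Qd φ j k) i

noncomputable def AA (φ : SchwartzMap E2 ℝ) (x : E2) : ℝ :=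
  |φ x| + |Pd φ 0 x| + |Pd φ 1 x|
  + |Qd φ 0 0 x| + |Qd φ 0 1 x| + |Qd φ 1 0 x| + |Qd φ 1 1 x|
  + |Rd φ 0 0 0 x| + |Rd φ 0 0 1 x| + |Rd φ 0 1 0 x| + |Rd φ 0 1 1 x|
  + |Rd φ 1 0 0 x| + |Rd φ 1 0 1 x| + |Rd φ 1 1 0 x| + |Rd φ 1 1 1 x|

lemma AA_nonneg (φ : SchwartzMap E2 ℝ) (x : E2) : 0 ≤ AA φ x := by
  unfold AA; positivity

lemma AA_bdd (φ : SchwartzMap E2 ℝ) : ∃ C, 0 ≤ C ∧ ∀ x, AA φ x ≤ C := by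
  refine ⟨SchwartzMap.seminorm ℝ 0 0 (φ) + SchwartzMap.seminorm ℝ 0 0 (Pd φ 0) + SchwartzMap.seminorm ℝ 0 0 (Pd φ 1) + SchwartzMap.seminorm ℝ 0 0 (Qd φ 0 0) + SchwartzMap.seminorm ℝ 0 0 (Qd φ 0 1) + SchwartzMap.seminorm ℝ 0 0 (Qd φ 1 0) + SchwartzMap.seminorm ℝ 0 0 (Qd φ 1 1) + SchwartzMap.seminorm ℝ 0 0 (Rd φ 0 0 0) + SchwartzMap.seminorm ℝ 0 0 (Rd φ 0 0 1) + SchwartzMap.seminorm ℝ 0 0 (Rd φ 0 1 0) + SchwartzMap.seminorm ℝ 0 0 (Rd φ 0 1 1) + SchwartzMap.seminorm ℝ 0 0 (Rd φ 1 0 0) + SchwartzMap.seminorm ℝ 0 0 (Rd φ 1 0 1) + SchwartzMap.seminorm ℝ 0 0 (Rd φ 1 1 0) + SchwartzMap.seminorm ℝ 0 0 (Rd φ 1 1 1), by positivity, fun x => ?_⟩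
  unfold AA
  gcongr <;> · rw [← Real.norm_eq_abs]; exact SchwartzMap.norm_le_seminorm ℝ _ _

lemma intw (S : SchwartzMap E2 ℝ) :
    Integrable (fun x : E2 => (1+‖x‖)^2 * |S x|) volume := by
  have e : (fun x : E2 => (1+‖x‖)^2 * |S x|)
      = fun x => ‖x‖^0 * ‖S x‖ + (2 * (‖x‖^1 * ‖S x‖) + ‖x‖^2 * ‖S x‖) := by
    funext x
    rw [Real.norm_eq_abs]
    ring
  rw [e]
  exact (S.integrable_pow_mul volume 0).add
    (((S.integrable_pow_mul volume 1).const_mul 2).add (S.integrable_pow_mul volume 2))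

lemma AA_int (φ : SchwartzMap E2 ℝ) :
    Integrable (fun x : E2 => (1+‖x‖)^2 * AA φ x) volume := by
  have e : (fun x : E2 => (1+‖x‖)^2 * AA φ x)
      = fun x => (1+‖x‖)^2 * |φ x| + ((1+‖x‖)^2 * |Pd φ 0 x| + ((1+‖x‖)^2 * |Pd φ 1 x|
      + ((1+‖x‖)^2 * |Qd φ 0 0 x| + ((1+‖x‖)^2 * |Qd φ 0 1 x| + ((1+‖x‖)^2 * |Qd φ 1 0 x|
      + ((1+‖x‖)^2 * |Qd φ 1 1 x| + ((1+‖x‖)^2 * |Rd φ 0 0 0 x| + ((1+‖x‖)^2 * |Rd φ 0 0 1 x|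
      + ((1+‖x‖)^2 * |Rd φ 0 1 0 x| + ((1+‖x‖)^2 * |Rd φ 0 1 1 x| + ((1+‖x‖)^2 * |Rd φ 1 0 0 x|
      + ((1+‖x‖)^2 * |Rd φ 1 0 1 x| + ((1+‖x‖)^2 * |Rd φ 1 1 0 x|
      + (1+‖x‖)^2 * |Rd φ 1 1 1 x|))))))))))))) := by
    funext x; unfold AA; ring
  rw [e]
  exact (intw _).add ((intw _).add ((intw _).add ((intw _).add ((intw _).add ((intw _).add
    ((intw _).add ((intw _).add ((intw _).add ((intw _).add ((intw _).add ((intw _).add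
    ((intw _).add ((intw _).add (intw _))))))))))))))

lemma integrable_dom (φ : SchwartzMap E2 ℝ) {u : E2 → ℝ} (hu : AEStronglyMeasurable u volume)
    {C : ℝ} (hC : ∀ x, |u x| ≤ C * ((1+‖x‖)^2 * AA φ x)) : Integrable u volume := by
  refine Integrable.mono' ((AA_int φ).const_mul C) hu (ae_of_all _ fun x => ?_)
  rw [Real.norm_eq_abs]
  exact hC x

lemma abs_coord (x : E2) (i : Fin 2) : |x i| ≤ ‖x‖ := by
  rw [EuclideanSpace.norm_eq]
  have h1 : |x i| = Real.sqrt (‖x i‖^2) := by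
    rw [Real.sqrt_sq_eq_abs, Real.norm_eq_abs, abs_abs]
  rw [h1]
  apply Real.sqrt_le_sqrt
  exact Finset.single_le_sum (f := fun j => ‖x j‖^2) (fun j _ => by positivity)
    (Finset.mem_univ i)

lemma integral_pd_eq_zero {u : E2 → ℝ} (hd : Differentiable ℝ u) (hu : Integrable u volume)
    (v : E2) (hu' : Integrable (fun x => fderiv ℝ u x v) volume) :
    ∫ x : E2, fderiv ℝ u x v = 0 := by
  have key := integral_mul_fderiv_eq_neg_fderiv_mul_of_integrable
    (f := fun _ : E2 => (1:ℝ)) (g := u) (v := v) (μ := volume)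
    ?_ ?_ ?_ (fun x _ => differentiable_const (1:ℝ) x) (fun x _ => hd x)
  · simpa using key
  · simpa [fderiv_const] using (integrable_zero E2 ℝ volume)
  · simpa using hu'
  · simpa using hu

----------------- chunk 5 : pointwise calculus -----------------

noncomputable def Ψe (φ : SchwartzMap E2 ℝ) : E2 → ℝ :=
  fun x => x 0 * Pd φ 0 x + x 1 * Pd φ 1 x + φ x

noncomputable def pdΨe (φ : SchwartzMap E2 ℝ) (i : Fin 2) : E2 → ℝ :=
  fun x => 2 * Pd φ i x + x 0 * Qd φ i 0 x + x 1 * Qd φ i 1 x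

noncomputable def pd2Ψe (φ : SchwartzMap E2 ℝ) (i : Fin 2) : E2 → ℝ :=
  fun x => 3 * Qd φ i i x + x 0 * Rd φ i i 0 x + x 1 * Rd φ i i 1 x

noncomputable def Vv (ω μ : ℝ) (φ : SchwartzMap E2 ℝ) (i : Fin 2) : E2 → ℝ :=
  fun x => Ψe φ x * pdΨe φ i x + Gt ω μ (φ x) * x i

noncomputable def DV (ω μ : ℝ) (φ : SchwartzMap E2 ℝ) (i : Fin 2) : E2 → ℝ :=
  fun x => pdΨe φ i x ^ 2 + Ψe φ x * pd2Ψe φ i x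
    + Gp ω μ (φ x) * Pd φ i x * x i + Gt ω μ (φ x)

lemma pd_schwartz' (S : SchwartzMap E2 ℝ) (i : Fin 2) : pd i (⇑S) = ⇑(Pd S i) :=
  funext (pd_schwartz S i)

lemma rad_eq (φ : SchwartzMap E2 ℝ) (x : E2) :
    rad (⇑φ) x = x 0 * Pd φ 0 x + x 1 * Pd φ 1 x := by
  unfold rad
  rw [pd_schwartz, pd_schwartz]
  rfl

lemma Ψe_eq (φ : SchwartzMap E2 ℝ) (x : E2) : rad (⇑φ) x + φ x = Ψe φ x := by
  rw [rad_eq]; rfl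

lemma diff_Ψe (φ : SchwartzMap E2 ℝ) : Differentiable ℝ (Ψe φ) :=
  (((diff_coord 0).mul (Pd φ 0).differentiable).add
    ((diff_coord 1).mul (Pd φ 1).differentiable)).add φ.differentiable

lemma diff_pdΨe (φ : SchwartzMap E2 ℝ) (i : Fin 2) : Differentiable ℝ (pdΨe φ i) :=
  (((differentiable_const 2).mul (Pd φ i).differentiable).add
    ((diff_coord 0).mul (Qd φ i 0).differentiable)).add
    ((diff_coord 1).mul (Qd φ i 1).differentiable)

lemma pd_Ψe (φ : SchwartzMap E2 ℝ) (i : Fin 2) (x : E2) :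
    pd i (Ψe φ) x = pdΨe φ i x := by
  unfold Ψe
  rw [pd_add (((diff_coord 0).fun_mul (Pd φ 0).differentiable).fun_add
    ((diff_coord 1).fun_mul (Pd φ 1).differentiable)) φ.differentiable,
    pd_add ((diff_coord 0).fun_mul (Pd φ 0).differentiable)
      ((diff_coord 1).fun_mul (Pd φ 1).differentiable),
    pd_coord_mul (Pd φ 0).differentiable, pd_coord_mul (Pd φ 1).differentiable,
    pd_schwartz, pd_schwartz', pd_schwartz']
  unfold pdΨe
  show (ee i) 0 * Pd φ 0 x + x 0 * Pd (Pd φ 0) i x + ((ee i) 1 * Pd φ 1 x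
      + x 1 * Pd (Pd φ 1) i x) + Pd φ i x = _
  have hQ0 : Pd (Pd φ 0) i x = Qd φ i 0 x := rfl
  have hQ1 : Pd (Pd φ 1) i x = Qd φ i 1 x := rfl
  rw [hQ0, hQ1]
  fin_cases i <;> simp [ee_apply] <;> ring

lemma pd_pdΨe (φ : SchwartzMap E2 ℝ) (i : Fin 2) (x : E2) :
    pd i (pdΨe φ i) x = pd2Ψe φ i x := by
  unfold pdΨe
  rw [pd_add (((differentiable_const 2).fun_mul (Pd φ i).differentiable).fun_add
      ((diff_coord 0).fun_mul (Qd φ i 0).differentiable))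
      ((diff_coord 1).fun_mul (Qd φ i 1).differentiable),
    pd_add ((differentiable_const 2).fun_mul (Pd φ i).differentiable)
      ((diff_coord 0).fun_mul (Qd φ i 0).differentiable),
    pd_const_mul (Pd φ i).differentiable,
    pd_coord_mul (Qd φ i 0).differentiable, pd_coord_mul (Qd φ i 1).differentiable,
    pd_schwartz', pd_schwartz', pd_schwartz']
  unfold pd2Ψe
  show 2 * Pd (Pd φ i) i x + ((ee i) 0 * Qd φ i 0 x + x 0 * Pd (Qd φ i 0) i x)
      + ((ee i) 1 * Qd φ i 1 x + x 1 * Pd (Qd φ i 1) i x) = _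
  have h1 : Pd (Pd φ i) i x = Qd φ i i x := rfl
  have h2 : Pd (Qd φ i 0) i x = Rd φ i i 0 x := rfl
  have h3 : Pd (Qd φ i 1) i x = Rd φ i i 1 x := rfl
  rw [h1, h2, h3]
  fin_cases i <;> simp [ee_apply] <;> ring

lemma diff_Gtφ (ω μ : ℝ) (φ : SchwartzMap E2 ℝ) :
    Differentiable ℝ (fun x : E2 => Gt ω μ (φ x)) := fun x =>
  (hasDerivAt_Gt ω μ (φ x)).differentiableAt.comp x (φ.differentiable x)

lemma diff_Vv (ω μ : ℝ) (φ : SchwartzMap E2 ℝ) (i : Fin 2) :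
    Differentiable ℝ (Vv ω μ φ i) :=
  ((diff_Ψe φ).mul (diff_pdΨe φ i)).add ((diff_Gtφ ω μ φ).mul (diff_coord i))

lemma pd_Vv (ω μ : ℝ) (φ : SchwartzMap E2 ℝ) (i : Fin 2) (x : E2) :
    pd i (Vv ω μ φ i) x = DV ω μ φ i x := by
  unfold Vv
  rw [pd_add ((diff_Ψe φ).fun_mul (diff_pdΨe φ i)) ((diff_Gtφ ω μ φ).fun_mul (diff_coord i)),
    pd_mul (diff_Ψe φ) (diff_pdΨe φ i)]
  have h2 : pd i (fun y => Gt ω μ (φ y) * y i) x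
      = Gp ω μ (φ x) * Pd φ i x * x i + Gt ω μ (φ x) * (ee i) i := by
    rw [show (fun y : E2 => Gt ω μ (φ y) * y i)
        = fun y => (fun z : E2 => Gt ω μ (φ z)) y * (fun z : E2 => z i) y from rfl,
      pd_mul (diff_Gtφ ω μ φ) (diff_coord i), pd_coord,
      pd_comp (hasDerivAt_Gt ω μ) φ.differentiable, pd_schwartz]
    rfl
  rw [h2, pd_Ψe, pd_pdΨe]
  have : (ee i) i = 1 := by fin_cases i <;> simp [ee_apply]
  rw [this]
  unfold DV
  ring

----------------- chunk 6 : symmetry + equation consequences -----------------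

lemma Qd_eq_pd (φ : SchwartzMap E2 ℝ) (i j : Fin 2) (x : E2) :
    Qd φ i j x = pd i (pd j ⇑φ) x := by
  rw [pd_schwartz' φ j, pd_schwartz]
  rfl

lemma symmQ (φ : SchwartzMap E2 ℝ) (i j : Fin 2) (x : E2) :
    Qd φ i j x = Qd φ j i x := by
  rw [Qd_eq_pd, Qd_eq_pd]
  exact pd_pd_symm (φ.smooth ⊤) i j x

lemma Rd_eq_pd (φ : SchwartzMap E2 ℝ) (i j k : Fin 2) (x : E2) :
    Rd φ i j k x = pd i (pd j (pd k ⇑φ)) x := by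
  rw [pd_schwartz' φ k, pd_schwartz' (Pd φ k) j, pd_schwartz]
  rfl

-- R i j k is symmetric in all permutations; we need two shuffles
lemma symmR110 (φ : SchwartzMap E2 ℝ) (x : E2) :
    Rd φ 1 1 0 x = Rd φ 0 1 1 x := by
  rw [Rd_eq_pd, Rd_eq_pd]
  -- pd 1 (pd 1 (pd 0 φ)) = pd 1 (pd 0 (pd 1 φ)) = pd 0 (pd 1 (pd 1 φ))
  have h1 : (pd 1 (pd 0 ⇑φ)) = (pd 0 (pd 1 ⇑φ)) :=
    funext (fun y => pd_pd_symm (φ.smooth ⊤) 1 0 y)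
  rw [h1]
  rw [pd_schwartz' φ 1]
  exact pd_pd_symm ((Pd φ 1).smooth ⊤) 1 0 x

lemma symmR001 (φ : SchwartzMap E2 ℝ) (x : E2) :
    Rd φ 0 0 1 x = Rd φ 1 0 0 x := by
  rw [Rd_eq_pd, Rd_eq_pd]
  have h1 : (pd 0 (pd 1 ⇑φ)) = (pd 1 (pd 0 ⇑φ)) :=
    funext (fun y => pd_pd_symm (φ.smooth ⊤) 0 1 y)
  rw [h1]
  rw [pd_schwartz' φ 0]
  exact pd_pd_symm ((Pd φ 0).smooth ⊤) 0 1 x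

section WithEq

variable (ω μ : ℝ) (φ : SchwartzMap E2 ℝ)
variable (heq : ∀ x : E2,
  -lap (⇑φ) x + ω * φ x = (exp (4 * π * φ x ^ 2) - 1 - 4 * π * μ * φ x ^ 2) * φ x)

include heq

lemma lap_phi_eq : ∀ x : E2, Qd φ 0 0 x + Qd φ 1 1 x = ω * φ x - fn μ (φ x) := by
  intro x
  have h := heq x
  have hl : lap (⇑φ) x = Qd φ 0 0 x + Qd φ 1 1 x := by
    unfold lap
    rw [Qd_eq_pd, Qd_eq_pd]
  rw [hl] at h
  unfold fn
  linarith

lemma hstar (i : Fin 2) : ∀ x : E2,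
    Rd φ i 0 0 x + Rd φ i 1 1 x = (ω - fp μ (φ x)) * Pd φ i x := by
  intro x
  have hL : Rd φ i 0 0 x + Rd φ i 1 1 x
      = pd i (fun y => Qd φ 0 0 y + Qd φ 1 1 y) x := by
    rw [pd_add (Qd φ 0 0).differentiable (Qd φ 1 1).differentiable,
      pd_schwartz, pd_schwartz]
    rfl
  have hR : pd i (fun y => Qd φ 0 0 y + Qd φ 1 1 y) x
      = pd i (fun y => ω * φ y - fn μ (φ y)) x :=
    pd_congr (lap_phi_eq ω μ φ heq) i x
  have hfnφ : Differentiable ℝ (fun y : E2 => fn μ (φ y)) := fun y =>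
    DifferentiableAt.comp y (hasDerivAt_fn μ (φ y)).differentiableAt (φ.differentiable y)
  have hR2 : pd i (fun y => ω * φ y - fn μ (φ y)) x
      = ω * Pd φ i x - fp μ (φ x) * Pd φ i x := by
    rw [pd_sub ((differentiable_const ω).fun_mul φ.differentiable) hfnφ,
      pd_const_mul φ.differentiable, pd_comp (hasDerivAt_fn μ) φ.differentiable,
      pd_schwartz]
    rfl
  rw [hL, hR, hR2]
  ring

-- the grand pointwise identity
lemma grand_identity : ∀ x : E2,
    (pdΨe φ 0 x ^ 2 + pdΨe φ 1 x ^ 2 + ω * (Ψe φ x) ^ 2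
      - fp μ (φ x) * (Ψe φ x) ^ 2) + gg (φ x)
    = DV ω μ φ 0 x + DV ω μ φ 1 x := by
  intro x
  have hQ := lap_phi_eq ω μ φ heq x
  have h0 := hstar ω μ φ heq 0 x
  have h1 := hstar ω μ φ heq 1 x
  have hs110 := symmR110 φ x
  have hs001 := symmR001 φ x
  have hkey := key_alg ω μ (x 0 * Pd φ 0 x + x 1 * Pd φ 1 x) (φ x)
  unfold DV pd2Ψe Ψe
  linear_combination hkey
    - 3*(x 0 * Pd φ 0 x + x 1 * Pd φ 1 x + φ x)*hQ
    - (x 0 * Pd φ 0 x + x 1 * Pd φ 1 x + φ x)*(x 0)*h0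
    - (x 0 * Pd φ 0 x + x 1 * Pd φ 1 x + φ x)*(x 0)*hs110
    - (x 0 * Pd φ 0 x + x 1 * Pd φ 1 x + φ x)*(x 1)*h1
    - (x 0 * Pd φ 0 x + x 1 * Pd φ 1 x + φ x)*(x 1)*hs001

end WithEq

----------------- chunk 7 : bounds and integrability -----------------

lemma le_AA_phi (φ : SchwartzMap E2 ℝ) (x : E2) : |φ x| ≤ AA φ x := by
  unfold AA; linarith [abs_nonneg (φ x), abs_nonneg (Pd φ 0 x), abs_nonneg (Pd φ 1 x), abs_nonneg (Qd φ 0 0 x), abs_nonneg (Qd φ 0 1 x), abs_nonneg (Qd φ 1 0 x), abs_nonneg (Qd φ 1 1 x), abs_nonneg (Rd φ 0 0 0 x), abs_nonneg (Rd φ 0 0 1 x), abs_nonneg (Rd φ 0 1 0 x), abs_nonneg (Rd φ 0 1 1 x), abs_nonneg (Rd φ 1 0 0 x), abs_nonneg (Rd φ 1 0 1 x), abs_nonneg (Rd φ 1 1 0 x), abs_nonneg (Rd φ 1 1 1 x)]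

lemma le_AA_P0 (φ : SchwartzMap E2 ℝ) (x : E2) : |Pd φ 0 x| ≤ AA φ x := by
  unfold AA; linarith [abs_nonneg (φ x), abs_nonneg (Pd φ 0 x), abs_nonneg (Pd φ 1 x), abs_nonneg (Qd φ 0 0 x), abs_nonneg (Qd φ 0 1 x), abs_nonneg (Qd φ 1 0 x), abs_nonneg (Qd φ 1 1 x), abs_nonneg (Rd φ 0 0 0 x), abs_nonneg (Rd φ 0 0 1 x), abs_nonneg (Rd φ 0 1 0 x), abs_nonneg (Rd φ 0 1 1 x), abs_nonneg (Rd φ 1 0 0 x), abs_nonneg (Rd φ 1 0 1 x), abs_nonneg (Rd φ 1 1 0 x), abs_nonneg (Rd φ 1 1 1 x)]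

lemma le_AA_P1 (φ : SchwartzMap E2 ℝ) (x : E2) : |Pd φ 1 x| ≤ AA φ x := by
  unfold AA; linarith [abs_nonneg (φ x), abs_nonneg (Pd φ 0 x), abs_nonneg (Pd φ 1 x), abs_nonneg (Qd φ 0 0 x), abs_nonneg (Qd φ 0 1 x), abs_nonneg (Qd φ 1 0 x), abs_nonneg (Qd φ 1 1 x), abs_nonneg (Rd φ 0 0 0 x), abs_nonneg (Rd φ 0 0 1 x), abs_nonneg (Rd φ 0 1 0 x), abs_nonneg (Rd φ 0 1 1 x), abs_nonneg (Rd φ 1 0 0 x), abs_nonneg (Rd φ 1 0 1 x), abs_nonneg (Rd φ 1 1 0 x), abs_nonneg (Rd φ 1 1 1 x)]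

lemma le_AA_Q00 (φ : SchwartzMap E2 ℝ) (x : E2) : |Qd φ 0 0 x| ≤ AA φ x := by
  unfold AA; linarith [abs_nonneg (φ x), abs_nonneg (Pd φ 0 x), abs_nonneg (Pd φ 1 x), abs_nonneg (Qd φ 0 0 x), abs_nonneg (Qd φ 0 1 x), abs_nonneg (Qd φ 1 0 x), abs_nonneg (Qd φ 1 1 x), abs_nonneg (Rd φ 0 0 0 x), abs_nonneg (Rd φ 0 0 1 x), abs_nonneg (Rd φ 0 1 0 x), abs_nonneg (Rd φ 0 1 1 x), abs_nonneg (Rd φ 1 0 0 x), abs_nonneg (Rd φ 1 0 1 x), abs_nonneg (Rd φ 1 1 0 x), abs_nonneg (Rd φ 1 1 1 x)]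

lemma le_AA_Q01 (φ : SchwartzMap E2 ℝ) (x : E2) : |Qd φ 0 1 x| ≤ AA φ x := by
  unfold AA; linarith [abs_nonneg (φ x), abs_nonneg (Pd φ 0 x), abs_nonneg (Pd φ 1 x), abs_nonneg (Qd φ 0 0 x), abs_nonneg (Qd φ 0 1 x), abs_nonneg (Qd φ 1 0 x), abs_nonneg (Qd φ 1 1 x), abs_nonneg (Rd φ 0 0 0 x), abs_nonneg (Rd φ 0 0 1 x), abs_nonneg (Rd φ 0 1 0 x), abs_nonneg (Rd φ 0 1 1 x), abs_nonneg (Rd φ 1 0 0 x), abs_nonneg (Rd φ 1 0 1 x), abs_nonneg (Rd φ 1 1 0 x), abs_nonneg (Rd φ 1 1 1 x)]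

lemma le_AA_Q10 (φ : SchwartzMap E2 ℝ) (x : E2) : |Qd φ 1 0 x| ≤ AA φ x := by
  unfold AA; linarith [abs_nonneg (φ x), abs_nonneg (Pd φ 0 x), abs_nonneg (Pd φ 1 x), abs_nonneg (Qd φ 0 0 x), abs_nonneg (Qd φ 0 1 x), abs_nonneg (Qd φ 1 0 x), abs_nonneg (Qd φ 1 1 x), abs_nonneg (Rd φ 0 0 0 x), abs_nonneg (Rd φ 0 0 1 x), abs_nonneg (Rd φ 0 1 0 x), abs_nonneg (Rd φ 0 1 1 x), abs_nonneg (Rd φ 1 0 0 x), abs_nonneg (Rd φ 1 0 1 x), abs_nonneg (Rd φ 1 1 0 x), abs_nonneg (Rd φ 1 1 1 x)]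

lemma le_AA_Q11 (φ : SchwartzMap E2 ℝ) (x : E2) : |Qd φ 1 1 x| ≤ AA φ x := by
  unfold AA; linarith [abs_nonneg (φ x), abs_nonneg (Pd φ 0 x), abs_nonneg (Pd φ 1 x), abs_nonneg (Qd φ 0 0 x), abs_nonneg (Qd φ 0 1 x), abs_nonneg (Qd φ 1 0 x), abs_nonneg (Qd φ 1 1 x), abs_nonneg (Rd φ 0 0 0 x), abs_nonneg (Rd φ 0 0 1 x), abs_nonneg (Rd φ 0 1 0 x), abs_nonneg (Rd φ 0 1 1 x), abs_nonneg (Rd φ 1 0 0 x), abs_nonneg (Rd φ 1 0 1 x), abs_nonneg (Rd φ 1 1 0 x), abs_nonneg (Rd φ 1 1 1 x)]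

lemma le_AA_R000 (φ : SchwartzMap E2 ℝ) (x : E2) : |Rd φ 0 0 0 x| ≤ AA φ x := by
  unfold AA; linarith [abs_nonneg (φ x), abs_nonneg (Pd φ 0 x), abs_nonneg (Pd φ 1 x), abs_nonneg (Qd φ 0 0 x), abs_nonneg (Qd φ 0 1 x), abs_nonneg (Qd φ 1 0 x), abs_nonneg (Qd φ 1 1 x), abs_nonneg (Rd φ 0 0 0 x), abs_nonneg (Rd φ 0 0 1 x), abs_nonneg (Rd φ 0 1 0 x), abs_nonneg (Rd φ 0 1 1 x), abs_nonneg (Rd φ 1 0 0 x), abs_nonneg (Rd φ 1 0 1 x), abs_nonneg (Rd φ 1 1 0 x), abs_nonneg (Rd φ 1 1 1 x)]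

lemma le_AA_R001 (φ : SchwartzMap E2 ℝ) (x : E2) : |Rd φ 0 0 1 x| ≤ AA φ x := by
  unfold AA; linarith [abs_nonneg (φ x), abs_nonneg (Pd φ 0 x), abs_nonneg (Pd φ 1 x), abs_nonneg (Qd φ 0 0 x), abs_nonneg (Qd φ 0 1 x), abs_nonneg (Qd φ 1 0 x), abs_nonneg (Qd φ 1 1 x), abs_nonneg (Rd φ 0 0 0 x), abs_nonneg (Rd φ 0 0 1 x), abs_nonneg (Rd φ 0 1 0 x), abs_nonneg (Rd φ 0 1 1 x), abs_nonneg (Rd φ 1 0 0 x), abs_nonneg (Rd φ 1 0 1 x), abs_nonneg (Rd φ 1 1 0 x), abs_nonneg (Rd φ 1 1 1 x)]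

lemma le_AA_R010 (φ : SchwartzMap E2 ℝ) (x : E2) : |Rd φ 0 1 0 x| ≤ AA φ x := by
  unfold AA; linarith [abs_nonneg (φ x), abs_nonneg (Pd φ 0 x), abs_nonneg (Pd φ 1 x), abs_nonneg (Qd φ 0 0 x), abs_nonneg (Qd φ 0 1 x), abs_nonneg (Qd φ 1 0 x), abs_nonneg (Qd φ 1 1 x), abs_nonneg (Rd φ 0 0 0 x), abs_nonneg (Rd φ 0 0 1 x), abs_nonneg (Rd φ 0 1 0 x), abs_nonneg (Rd φ 0 1 1 x), abs_nonneg (Rd φ 1 0 0 x), abs_nonneg (Rd φ 1 0 1 x), abs_nonneg (Rd φ 1 1 0 x), abs_nonneg (Rd φ 1 1 1 x)]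

lemma le_AA_R011 (φ : SchwartzMap E2 ℝ) (x : E2) : |Rd φ 0 1 1 x| ≤ AA φ x := by
  unfold AA; linarith [abs_nonneg (φ x), abs_nonneg (Pd φ 0 x), abs_nonneg (Pd φ 1 x), abs_nonneg (Qd φ 0 0 x), abs_nonneg (Qd φ 0 1 x), abs_nonneg (Qd φ 1 0 x), abs_nonneg (Qd φ 1 1 x), abs_nonneg (Rd φ 0 0 0 x), abs_nonneg (Rd φ 0 0 1 x), abs_nonneg (Rd φ 0 1 0 x), abs_nonneg (Rd φ 0 1 1 x), abs_nonneg (Rd φ 1 0 0 x), abs_nonneg (Rd φ 1 0 1 x), abs_nonneg (Rd φ 1 1 0 x), abs_nonneg (Rd φ 1 1 1 x)]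

lemma le_AA_R100 (φ : SchwartzMap E2 ℝ) (x : E2) : |Rd φ 1 0 0 x| ≤ AA φ x := by
  unfold AA; linarith [abs_nonneg (φ x), abs_nonneg (Pd φ 0 x), abs_nonneg (Pd φ 1 x), abs_nonneg (Qd φ 0 0 x), abs_nonneg (Qd φ 0 1 x), abs_nonneg (Qd φ 1 0 x), abs_nonneg (Qd φ 1 1 x), abs_nonneg (Rd φ 0 0 0 x), abs_nonneg (Rd φ 0 0 1 x), abs_nonneg (Rd φ 0 1 0 x), abs_nonneg (Rd φ 0 1 1 x), abs_nonneg (Rd φ 1 0 0 x), abs_nonneg (Rd φ 1 0 1 x), abs_nonneg (Rd φ 1 1 0 x), abs_nonneg (Rd φ 1 1 1 x)]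

lemma le_AA_R101 (φ : SchwartzMap E2 ℝ) (x : E2) : |Rd φ 1 0 1 x| ≤ AA φ x := by
  unfold AA; linarith [abs_nonneg (φ x), abs_nonneg (Pd φ 0 x), abs_nonneg (Pd φ 1 x), abs_nonneg (Qd φ 0 0 x), abs_nonneg (Qd φ 0 1 x), abs_nonneg (Qd φ 1 0 x), abs_nonneg (Qd φ 1 1 x), abs_nonneg (Rd φ 0 0 0 x), abs_nonneg (Rd φ 0 0 1 x), abs_nonneg (Rd φ 0 1 0 x), abs_nonneg (Rd φ 0 1 1 x), abs_nonneg (Rd φ 1 0 0 x), abs_nonneg (Rd φ 1 0 1 x), abs_nonneg (Rd φ 1 1 0 x), abs_nonneg (Rd φ 1 1 1 x)]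

lemma le_AA_R110 (φ : SchwartzMap E2 ℝ) (x : E2) : |Rd φ 1 1 0 x| ≤ AA φ x := by
  unfold AA; linarith [abs_nonneg (φ x), abs_nonneg (Pd φ 0 x), abs_nonneg (Pd φ 1 x), abs_nonneg (Qd φ 0 0 x), abs_nonneg (Qd φ 0 1 x), abs_nonneg (Qd φ 1 0 x), abs_nonneg (Qd φ 1 1 x), abs_nonneg (Rd φ 0 0 0 x), abs_nonneg (Rd φ 0 0 1 x), abs_nonneg (Rd φ 0 1 0 x), abs_nonneg (Rd φ 0 1 1 x), abs_nonneg (Rd φ 1 0 0 x), abs_nonneg (Rd φ 1 0 1 x), abs_nonneg (Rd φ 1 1 0 x), abs_nonneg (Rd φ 1 1 1 x)]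

lemma le_AA_R111 (φ : SchwartzMap E2 ℝ) (x : E2) : |Rd φ 1 1 1 x| ≤ AA φ x := by
  unfold AA; linarith [abs_nonneg (φ x), abs_nonneg (Pd φ 0 x), abs_nonneg (Pd φ 1 x), abs_nonneg (Qd φ 0 0 x), abs_nonneg (Qd φ 0 1 x), abs_nonneg (Qd φ 1 0 x), abs_nonneg (Qd φ 1 1 x), abs_nonneg (Rd φ 0 0 0 x), abs_nonneg (Rd φ 0 0 1 x), abs_nonneg (Rd φ 0 1 0 x), abs_nonneg (Rd φ 0 1 1 x), abs_nonneg (Rd φ 1 0 0 x), abs_nonneg (Rd φ 1 0 1 x), abs_nonneg (Rd φ 1 1 0 x), abs_nonneg (Rd φ 1 1 1 x)]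

lemma sq_le_of_abs_le {t b : ℝ} (h : |t| ≤ b) : t^2 ≤ b^2 := by
  nlinarith [abs_nonneg t, sq_abs t, neg_abs_le t, le_abs_self t]

lemma prod_bound {u v bu bv : ℝ} (hu : |u| ≤ bu) (hv : |v| ≤ bv) : |u*v| ≤ bu*bv := by
  rw [abs_mul]
  exact mul_le_mul hu hv (abs_nonneg v) ((abs_nonneg u).trans hu)

lemma bound_Ψe (φ : SchwartzMap E2 ℝ) (x : E2) : |Ψe φ x| ≤ 3*(1+‖x‖)*AA φ x := by
  have h0 := prod_bound (abs_coord x 0) (le_AA_P0 φ x)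
  have h1 := prod_bound (abs_coord x 1) (le_AA_P1 φ x)
  have h2 := le_AA_phi φ x
  have hA := AA_nonneg φ x
  have hn : (0:ℝ) ≤ ‖x‖ := norm_nonneg x
  unfold Ψe
  rw [abs_le]
  constructor <;>
    nlinarith [le_abs_self (x 0 * Pd φ 0 x), neg_abs_le (x 0 * Pd φ 0 x),
      le_abs_self (x 1 * Pd φ 1 x), neg_abs_le (x 1 * Pd φ 1 x),
      le_abs_self (φ x), neg_abs_le (φ x)]

lemma bound_pdΨe (φ : SchwartzMap E2 ℝ) (i : Fin 2) (x : E2) :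
    |pdΨe φ i x| ≤ 4*(1+‖x‖)*AA φ x := by
  have hP : |Pd φ i x| ≤ AA φ x := by
    fin_cases i
    · exact le_AA_P0 φ x
    · exact le_AA_P1 φ x
  have hQ0 : |Qd φ i 0 x| ≤ AA φ x := by
    fin_cases i
    · exact le_AA_Q00 φ x
    · exact le_AA_Q10 φ x
  have hQ1 : |Qd φ i 1 x| ≤ AA φ x := by
    fin_cases i
    · exact le_AA_Q01 φ x
    · exact le_AA_Q11 φ x
  have h0 := prod_bound (abs_coord x 0) hQ0
  have h1 := prod_bound (abs_coord x 1) hQ1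
  have hA := AA_nonneg φ x
  have hn : (0:ℝ) ≤ ‖x‖ := norm_nonneg x
  unfold pdΨe
  rw [abs_le]
  constructor <;>
    nlinarith [le_abs_self (x 0 * Qd φ i 0 x), neg_abs_le (x 0 * Qd φ i 0 x),
      le_abs_self (x 1 * Qd φ i 1 x), neg_abs_le (x 1 * Qd φ i 1 x),
      le_abs_self (Pd φ i x), neg_abs_le (Pd φ i x)]

lemma bound_pd2Ψe (φ : SchwartzMap E2 ℝ) (i : Fin 2) (x : E2) :
    |pd2Ψe φ i x| ≤ 5*(1+‖x‖)*AA φ x := by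
  have hQ : |Qd φ i i x| ≤ AA φ x := by
    fin_cases i
    · exact le_AA_Q00 φ x
    · exact le_AA_Q11 φ x
  have hR0 : |Rd φ i i 0 x| ≤ AA φ x := by
    fin_cases i
    · exact le_AA_R000 φ x
    · exact le_AA_R110 φ x
  have hR1 : |Rd φ i i 1 x| ≤ AA φ x := by
    fin_cases i
    · exact le_AA_R001 φ x
    · exact le_AA_R111 φ x
  have h0 := prod_bound (abs_coord x 0) hR0
  have h1 := prod_bound (abs_coord x 1) hR1
  have hA := AA_nonneg φ x
  have hn : (0:ℝ) ≤ ‖x‖ := norm_nonneg x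
  unfold pd2Ψe
  rw [abs_le]
  constructor <;>
    nlinarith [le_abs_self (x 0 * Rd φ i i 0 x), neg_abs_le (x 0 * Rd φ i i 0 x),
      le_abs_self (x 1 * Rd φ i i 1 x), neg_abs_le (x 1 * Rd φ i i 1 x),
      le_abs_self (Qd φ i i x), neg_abs_le (Qd φ i i x)]

lemma cont_coord (j : Fin 2) : Continuous (fun x : E2 => x j) := (diff_coord j).continuous

lemma cont_expq : Continuous (fun z : ℝ => exp (4*π*z^2)) := by
  apply Real.continuous_exp.comp
  continuity

lemma cont_fn (μ : ℝ) : Continuous (fn μ) := by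
  unfold fn
  apply Continuous.mul _ continuous_id
  apply Continuous.sub (Continuous.sub cont_expq continuous_const)
  continuity

lemma cont_fp (μ : ℝ) : Continuous (fp μ) := by
  unfold fp
  apply Continuous.sub (Continuous.sub (Continuous.mul cont_expq (by continuity)) continuous_const)
  continuity

lemma cont_Fn (μ : ℝ) : Continuous (Fn μ) := by
  unfold Fn
  apply Continuous.sub (Continuous.sub (Continuous.div_const (Continuous.sub cont_expq continuous_const) _) (by continuity))
  continuity

lemma cont_Gt (ω μ : ℝ) : Continuous (Gt ω μ) := by
  unfold Gt
  exact (Continuous.sub (Continuous.sub (continuous_const.mul (cont_Fn μ)) (by continuity))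
    (continuous_id.mul (cont_fn μ)))

lemma cont_Gp (ω μ : ℝ) : Continuous (Gp ω μ) := by
  unfold Gp
  exact (Continuous.sub (Continuous.sub (continuous_const.mul (cont_fn μ)) (by continuity))
    (continuous_id.mul (cont_fp μ)))

lemma cont_gg : Continuous gg := by
  unfold gg
  exact Continuous.sub (Continuous.mul cont_expq (by continuity)) continuous_const

lemma cont_Ψe (φ : SchwartzMap E2 ℝ) : Continuous (Ψe φ) := by
  unfold Ψe
  exact (((cont_coord 0).mul (Pd φ 0).continuous).add
    ((cont_coord 1).mul (Pd φ 1).continuous)).add φ.continuous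

lemma cont_pdΨe (φ : SchwartzMap E2 ℝ) (i : Fin 2) : Continuous (pdΨe φ i) := by
  unfold pdΨe
  exact ((continuous_const.mul (Pd φ i).continuous).add
    ((cont_coord 0).mul (Qd φ i 0).continuous)).add ((cont_coord 1).mul (Qd φ i 1).continuous)

lemma cont_pd2Ψe (φ : SchwartzMap E2 ℝ) (i : Fin 2) : Continuous (pd2Ψe φ i) := by
  unfold pd2Ψe
  exact ((continuous_const.mul (Qd φ i i).continuous).add
    ((cont_coord 0).mul (Rd φ i i 0).continuous)).add ((cont_coord 1).mul (Rd φ i i 1).continuous)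

lemma Gt_zero (ω μ : ℝ) : Gt ω μ 0 = 0 := by
  simp [Gt, Fn, fn]

lemma abs_add3 (a b c : ℝ) : |a+b+c| ≤ |a|+|b|+|c| := by
  calc |a+b+c| ≤ |a+b| + |c| := abs_add_le _ _
    _ ≤ |a|+|b|+|c| := by linarith [abs_add_le a b]

lemma abs_add4 (a b c d : ℝ) : |a+b+c+d| ≤ |a|+|b|+|c|+|d| := by
  calc |a+b+c+d| ≤ |a+b+c| + |d| := abs_add_le _ _
    _ ≤ _ := by linarith [abs_add3 a b c]

lemma abs_sub4 (a b c d : ℝ) : |a+b+c-d| ≤ |a|+|b|+|c|+|d| := by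
  rw [sub_eq_add_neg]
  have h := abs_add4 a b c (-d)
  rwa [abs_neg] at h

lemma int_gg (φ : SchwartzMap E2 ℝ) : Integrable (fun x : E2 => gg (φ x)) volume := by
  obtain ⟨CA, hCA0, hCA⟩ := AA_bdd φ
  obtain ⟨Kgg, hKgg0, hKgg⟩ := gg_lin_bound CA
  apply integrable_dom φ (cont_gg.comp φ.continuous).aestronglyMeasurable (C := Kgg)
  intro x
  have hφA := le_AA_phi φ x
  have hφ : |φ x| ≤ CA := hφA.trans (hCA x)
  have h1 : |gg (φ x)| ≤ Kgg * |φ x| := hKgg (φ x) hφ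
  have hA := AA_nonneg φ x
  have hn : (0:ℝ) ≤ ‖x‖ := norm_nonneg x
  calc |gg (φ x)| ≤ Kgg * |φ x| := h1
    _ ≤ Kgg * AA φ x := mul_le_mul_of_nonneg_left hφA hKgg0
    _ ≤ Kgg * ((1+‖x‖)^2 * AA φ x) := by
        nlinarith [mul_nonneg (mul_nonneg hKgg0 hA) hn,
          mul_nonneg (mul_nonneg (mul_nonneg hKgg0 hA) hn) hn]

lemma int_Qint (ω μ : ℝ) (φ : SchwartzMap E2 ℝ) :
    Integrable (fun x : E2 => pdΨe φ 0 x ^ 2 + pdΨe φ 1 x ^ 2 + ω * (Ψe φ x) ^ 2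
      - fp μ (φ x) * (Ψe φ x) ^ 2) volume := by
  obtain ⟨CA, hCA0, hCA⟩ := AA_bdd φ
  obtain ⟨Kfp, hKfp0, hKfp⟩ := bdd_on (cont_fp μ) CA
  apply integrable_dom φ ?_ (C := 32*CA + 9*(abs ω)*CA + 9*Kfp*CA)
  · intro x
    set n := ‖x‖ with hn'
    set a := AA φ x with ha'
    have hA : 0 ≤ a := AA_nonneg φ x
    have hn : (0:ℝ) ≤ n := norm_nonneg x
    have haCA : a ≤ CA := hCA x
    have hφ : |φ x| ≤ CA := (le_AA_phi φ x).trans haCA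
    have s0 : pdΨe φ 0 x ^ 2 ≤ 16*((1+n)^2*(a*a)) := by
      nlinarith [sq_le_of_abs_le (bound_pdΨe φ 0 x)]
    have s1 : pdΨe φ 1 x ^ 2 ≤ 16*((1+n)^2*(a*a)) := by
      nlinarith [sq_le_of_abs_le (bound_pdΨe φ 1 x)]
    have sΨ : (Ψe φ x) ^ 2 ≤ 9*((1+n)^2*(a*a)) := by
      nlinarith [sq_le_of_abs_le (bound_Ψe φ x)]
    have hfp : |fp μ (φ x)| ≤ Kfp := hKfp (φ x) hφ
    have h4 : |fp μ (φ x) * (Ψe φ x)^2| ≤ Kfp * (9*((1+n)^2*(a*a))) :=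
      prod_bound hfp (by rw [abs_of_nonneg (sq_nonneg _)]; exact sΨ)
    have h5 : |ω * (Ψe φ x)^2| ≤ |ω| * (9*((1+n)^2*(a*a))) :=
      prod_bound le_rfl (by rw [abs_of_nonneg (sq_nonneg _)]; exact sΨ)
    have haa : a*a ≤ CA*a := by nlinarith
    have hq : (1+n)^2*(a*a) ≤ CA*((1+n)^2*a) := by
      calc (1+n)^2*(a*a) ≤ (1+n)^2*(CA*a) :=
            mul_le_mul_of_nonneg_left haa (by positivity)
        _ = CA*((1+n)^2*a) := by ring
    have hqω : (abs ω)*((1+n)^2*(a*a)) ≤ (abs ω)*(CA*((1+n)^2*a)) :=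
      mul_le_mul_of_nonneg_left hq (abs_nonneg ω)
    have hqf : Kfp*((1+n)^2*(a*a)) ≤ Kfp*(CA*((1+n)^2*a)) :=
      mul_le_mul_of_nonneg_left hq hKfp0
    have htri := abs_sub4 (pdΨe φ 0 x ^ 2) (pdΨe φ 1 x ^ 2) (ω * (Ψe φ x)^2)
      (fp μ (φ x) * (Ψe φ x)^2)
    have e0 : |pdΨe φ 0 x ^ 2| = pdΨe φ 0 x ^ 2 := abs_of_nonneg (sq_nonneg _)
    have e1 : |pdΨe φ 1 x ^ 2| = pdΨe φ 1 x ^ 2 := abs_of_nonneg (sq_nonneg _)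
    rw [e0, e1] at htri
    nlinarith [htri, s0, s1, h4, h5, hq, hqω, hqf]
  · exact (((((cont_pdΨe φ 0).pow 2).add ((cont_pdΨe φ 1).pow 2)).add
      (continuous_const.mul ((cont_Ψe φ).pow 2))).sub
      (((cont_fp μ).comp φ.continuous).mul ((cont_Ψe φ).pow 2))).aestronglyMeasurable

lemma int_Vv (ω μ : ℝ) (φ : SchwartzMap E2 ℝ) (i : Fin 2) :
    Integrable (Vv ω μ φ i) volume := by
  obtain ⟨CA, hCA0, hCA⟩ := AA_bdd φ
  obtain ⟨KGt, hKGt0, hKGt⟩ := lin_bound (hasDerivAt_Gt ω μ) (cont_Gp ω μ) (Gt_zero ω μ) CA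
  apply integrable_dom φ ?_ (C := 12*CA + KGt)
  · intro x
    set n := ‖x‖
    set a := AA φ x
    have hA : 0 ≤ a := AA_nonneg φ x
    have hn : (0:ℝ) ≤ n := norm_nonneg x
    have haCA : a ≤ CA := hCA x
    have hφa := le_AA_phi φ x
    have hφ : |φ x| ≤ CA := hφa.trans haCA
    have h1 : |Ψe φ x * pdΨe φ i x| ≤ (3*(1+n)*a) * (4*(1+n)*a) :=
      prod_bound (bound_Ψe φ x) (bound_pdΨe φ i x)
    have hGtb : |Gt ω μ (φ x)| ≤ KGt * |φ x| := hKGt (φ x) hφ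
    have h2 : |Gt ω μ (φ x) * x i| ≤ (KGt * |φ x|) * n :=
      prod_bound hGtb (abs_coord x i)
    have haa : a*a ≤ CA*a := by nlinarith
    have hq : (1+n)^2*(a*a) ≤ CA*((1+n)^2*a) := by
      calc (1+n)^2*(a*a) ≤ (1+n)^2*(CA*a) :=
            mul_le_mul_of_nonneg_left haa (by positivity)
        _ = CA*((1+n)^2*a) := by ring
    have h2' : (KGt * |φ x|) * n ≤ KGt*((1+n)^2*a) := by
      have i1 : (KGt * |φ x|) * n ≤ (KGt * a) * n :=
        mul_le_mul_of_nonneg_right (mul_le_mul_of_nonneg_left hφa hKGt0) hn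
      have i2 : (KGt * a) * n ≤ (KGt * a) * (1+n)^2 :=
        mul_le_mul_of_nonneg_left (by nlinarith) (mul_nonneg hKGt0 hA)
      calc (KGt * |φ x|) * n ≤ (KGt * a) * (1+n)^2 := i1.trans i2
        _ = KGt*((1+n)^2*a) := by ring
    unfold Vv
    have htri := abs_add_le (Ψe φ x * pdΨe φ i x) (Gt ω μ (φ x) * x i)
    nlinarith [htri, h1, h2, h2', hq]
  · exact (((cont_Ψe φ).mul (cont_pdΨe φ i)).add
      (((cont_Gt ω μ).comp φ.continuous).mul (cont_coord i))).aestronglyMeasurable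

lemma int_DV (ω μ : ℝ) (φ : SchwartzMap E2 ℝ) (i : Fin 2) :
    Integrable (DV ω μ φ i) volume := by
  obtain ⟨CA, hCA0, hCA⟩ := AA_bdd φ
  obtain ⟨KGt, hKGt0, hKGt⟩ := lin_bound (hasDerivAt_Gt ω μ) (cont_Gp ω μ) (Gt_zero ω μ) CA
  obtain ⟨KGp, hKGp0, hKGp⟩ := bdd_on (cont_Gp ω μ) CA
  apply integrable_dom φ ?_ (C := 31*CA + KGp + KGt)
  · intro x
    set n := ‖x‖
    set a := AA φ x
    have hA : 0 ≤ a := AA_nonneg φ x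
    have hn : (0:ℝ) ≤ n := norm_nonneg x
    have haCA : a ≤ CA := hCA x
    have hφa := le_AA_phi φ x
    have hφ : |φ x| ≤ CA := hφa.trans haCA
    have hPa : |Pd φ i x| ≤ a := by
      fin_cases i
      · exact le_AA_P0 φ x
      · exact le_AA_P1 φ x
    have s0 : pdΨe φ i x ^ 2 ≤ 16*((1+n)^2*(a*a)) := by
      nlinarith [sq_le_of_abs_le (bound_pdΨe φ i x)]
    have h1 : |Ψe φ x * pd2Ψe φ i x| ≤ (3*(1+n)*a) * (5*(1+n)*a) :=
      prod_bound (bound_Ψe φ x) (bound_pd2Ψe φ i x)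
    have hGpb : |Gp ω μ (φ x)| ≤ KGp := hKGp (φ x) hφ
    have h2 : |Gp ω μ (φ x) * Pd φ i x * x i| ≤ (KGp * a) * n :=
      prod_bound (prod_bound hGpb hPa) (abs_coord x i)
    have hGtb : |Gt ω μ (φ x)| ≤ KGt * |φ x| := hKGt (φ x) hφ
    have h3 : |Gt ω μ (φ x)| ≤ KGt * a := hGtb.trans (by
      exact mul_le_mul_of_nonneg_left hφa hKGt0)
    have haa : a*a ≤ CA*a := by nlinarith
    have hq : (1+n)^2*(a*a) ≤ CA*((1+n)^2*a) := by
      calc (1+n)^2*(a*a) ≤ (1+n)^2*(CA*a) :=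
            mul_le_mul_of_nonneg_left haa (by positivity)
        _ = CA*((1+n)^2*a) := by ring
    have h2' : (KGp * a) * n ≤ KGp*((1+n)^2*a) := by
      have i2 : (KGp * a) * n ≤ (KGp * a) * (1+n)^2 :=
        mul_le_mul_of_nonneg_left (by nlinarith) (mul_nonneg hKGp0 hA)
      calc (KGp * a) * n ≤ (KGp * a) * (1+n)^2 := i2
        _ = KGp*((1+n)^2*a) := by ring
    have h3' : KGt * a ≤ KGt*((1+n)^2*a) := by
      have i2 : (KGt * a) * 1 ≤ (KGt * a) * (1+n)^2 :=
        mul_le_mul_of_nonneg_left (by nlinarith) (mul_nonneg hKGt0 hA)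
      calc KGt * a = (KGt * a) * 1 := by ring
        _ ≤ (KGt * a) * (1+n)^2 := i2
        _ = KGt*((1+n)^2*a) := by ring
    unfold DV
    have htri := abs_add4 (pdΨe φ i x ^ 2) (Ψe φ x * pd2Ψe φ i x)
      (Gp ω μ (φ x) * Pd φ i x * x i) (Gt ω μ (φ x))
    have e0 : |pdΨe φ i x ^ 2| = pdΨe φ i x ^ 2 := abs_of_nonneg (sq_nonneg _)
    rw [e0] at htri
    nlinarith [htri, s0, h1, h2, h2', h3, h3', hq]
  · exact ((((cont_pdΨe φ i).pow 2).add ((cont_Ψe φ).mul (cont_pd2Ψe φ i))).add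
      ((((cont_Gp ω μ).comp φ.continuous).mul (Pd φ i).continuous).mul (cont_coord i))).add
      ((cont_Gt ω μ).comp φ.continuous) |>.aestronglyMeasurable

----------------- chunk 8 : integral identities and main theorem -----------------

lemma int_DV' (ω μ : ℝ) (φ : SchwartzMap E2 ℝ) (i : Fin 2) :
    Integrable (fun x : E2 => fderiv ℝ (Vv ω μ φ i) x (ee i)) volume := by
  have h : (fun x : E2 => fderiv ℝ (Vv ω μ φ i) x (ee i)) = DV ω μ φ i :=
    funext (fun x => pd_Vv ω μ φ i x)
  rw [h]
  exact int_DV ω μ φ i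

lemma integral_DV_zero (ω μ : ℝ) (φ : SchwartzMap E2 ℝ) (i : Fin 2) :
    ∫ x : E2, DV ω μ φ i x = 0 := by
  have h : (fun x : E2 => fderiv ℝ (Vv ω μ φ i) x (ee i)) = DV ω μ φ i :=
    funext (fun x => pd_Vv ω μ φ i x)
  rw [← h]
  exact integral_pd_eq_zero (diff_Vv ω μ φ i) (int_Vv ω μ φ i) (ee i) (int_DV' ω μ φ i)

lemma integral_main (ω μ : ℝ) (φ : SchwartzMap E2 ℝ)
    (heq : ∀ x : E2,
      -lap (⇑φ) x + ω * φ x = (exp (4 * π * φ x ^ 2) - 1 - 4 * π * μ * φ x ^ 2) * φ x) :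
    (∫ x : E2, (pdΨe φ 0 x ^ 2 + pdΨe φ 1 x ^ 2 + ω * (Ψe φ x) ^ 2
      - fp μ (φ x) * (Ψe φ x) ^ 2)) = -∫ x : E2, gg (φ x) := by
  have hsum : (∫ x : E2, ((pdΨe φ 0 x ^ 2 + pdΨe φ 1 x ^ 2 + ω * (Ψe φ x) ^ 2
      - fp μ (φ x) * (Ψe φ x) ^ 2) + gg (φ x)))
      = ∫ x : E2, (DV ω μ φ 0 x + DV ω μ φ 1 x) := by
    apply integral_congr_ae
    filter_upwards with x
    exact grand_identity ω μ φ heq x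
  rw [integral_add (int_Qint ω μ φ) (int_gg φ),
    integral_add (int_DV ω μ φ 0) (int_DV ω μ φ 1),
    integral_DV_zero, integral_DV_zero] at hsum
  linarith


/-- For a Schwartz solution `φ` of the profile equation and `Ψ = x·∇φ + φ`,
the quadratic form `⟨L₊Ψ, Ψ⟩` equals
`−∫ (e^{4πφ²}(8πφ⁴ + 1/π − 4φ²) − 1/π)`, is `≤ 0`, and is `< 0` if
`φ ≢ 0`. -/
theorem stmt15 (ω μ : ℝ) (hω : 0 < ω) (hμ : μ = 0 ∨ μ = 1)
    (φ : SchwartzMap (EuclideanSpace ℝ (Fin 2)) ℝ)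
    (heq : ∀ x : EuclideanSpace ℝ (Fin 2),
      -lap (⇑φ) x + ω * φ x =
        (exp (4 * π * φ x ^ 2) - 1 - 4 * π * μ * φ x ^ 2) * φ x)
    (Ψ : EuclideanSpace ℝ (Fin 2) → ℝ)
    (hΨ : ∀ x : EuclideanSpace ℝ (Fin 2), Ψ x = rad (⇑φ) x + φ x) :
    (∫ x : EuclideanSpace ℝ (Fin 2),
        ((pd 0 Ψ x) ^ 2 + (pd 1 Ψ x) ^ 2 + ω * (Ψ x) ^ 2 -
          (exp (4 * π * φ x ^ 2) * (8 * π * φ x ^ 2 + 1) - 1 -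
            12 * π * μ * φ x ^ 2) * (Ψ x) ^ 2)) =
      -(∫ x : EuclideanSpace ℝ (Fin 2),
          (exp (4 * π * φ x ^ 2) *
            (8 * π * φ x ^ 4 + 1 / π - 4 * φ x ^ 2) - 1 / π)) ∧
    (∫ x : EuclideanSpace ℝ (Fin 2),
        ((pd 0 Ψ x) ^ 2 + (pd 1 Ψ x) ^ 2 + ω * (Ψ x) ^ 2 -
          (exp (4 * π * φ x ^ 2) * (8 * π * φ x ^ 2 + 1) - 1 -
            12 * π * μ * φ x ^ 2) * (Ψ x) ^ 2)) ≤ 0 ∧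
    ((∃ x : EuclideanSpace ℝ (Fin 2), φ x ≠ 0) →
      (∫ x : EuclideanSpace ℝ (Fin 2),
        ((pd 0 Ψ x) ^ 2 + (pd 1 Ψ x) ^ 2 + ω * (Ψ x) ^ 2 -
          (exp (4 * π * φ x ^ 2) * (8 * π * φ x ^ 2 + 1) - 1 -
            12 * π * μ * φ x ^ 2) * (Ψ x) ^ 2)) < 0) := by
  have hΨf : Ψ = Ψe φ := by
    funext x
    rw [hΨ x, Ψe_eq]
  have hint1 : (fun x : EuclideanSpace ℝ (Fin 2) =>
      (pd 0 Ψ x) ^ 2 + (pd 1 Ψ x) ^ 2 + ω * (Ψ x) ^ 2 -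
        (exp (4 * π * φ x ^ 2) * (8 * π * φ x ^ 2 + 1) - 1 -
          12 * π * μ * φ x ^ 2) * (Ψ x) ^ 2)
      = fun x => pdΨe φ 0 x ^ 2 + pdΨe φ 1 x ^ 2 + ω * (Ψe φ x) ^ 2
        - fp μ (φ x) * (Ψe φ x) ^ 2 := by
    funext x
    rw [hΨf, pd_Ψe, pd_Ψe]
    rfl
  have hint2 : (fun x : EuclideanSpace ℝ (Fin 2) =>
      exp (4 * π * φ x ^ 2) * (8 * π * φ x ^ 4 + 1 / π - 4 * φ x ^ 2) - 1 / π)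
      = fun x => gg (φ x) := rfl
  rw [hint1, hint2]
  have hmain := integral_main ω μ φ heq
  have hggnn : 0 ≤ ∫ x : E2, gg (φ x) := integral_nonneg (fun x => gg_nonneg (φ x))
  refine ⟨hmain, by rw [hmain]; linarith, fun hex => ?_⟩
  rw [hmain]
  have hpos : 0 < ∫ x : E2, gg (φ x) := by
    rw [integral_pos_iff_support_of_nonneg (fun x => gg_nonneg (φ x)) (int_gg φ)]
    obtain ⟨x₀, hx₀⟩ := hex
    have hU : IsOpen {x : E2 | φ x ≠ 0} := by
      have : {x : E2 | φ x ≠ 0} = ⇑φ ⁻¹' ({0}ᶜ) := rfl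
      rw [this]
      exact (isOpen_compl_singleton).preimage φ.continuous
    have hsub : {x : E2 | φ x ≠ 0} ⊆ Function.support (fun x => gg (φ x)) :=
      fun x hx => (gg_pos _ hx).ne'
    calc (0:ENNReal) < volume {x : E2 | φ x ≠ 0} := hU.measure_pos volume ⟨x₀, hx₀⟩
      _ ≤ volume (Function.support (fun x : E2 => gg (φ x))) := measure_mono hsub
  linarith
end
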